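/- arXiv:0812.3097 — 6 statements merged into one kernel-verified Lean document; each statement's English description precedes it below -/
import Mathlib

section
/- Let G be a finite connected simple graph and suppose the quadratic binomial x_i x_j − x_k x_l belongs to I_G, where {i,j} ∩ {k,l} = ∅. Then the corresponding vector u ∈ ℤ^m (with u_i = u_j = 1, u_k = u_l = −1, and all other coordinates 0) is a circuit of ker_ℤ(M_G); in particular its support {i,j,k,l} is minimal with respect to inclusion among supports of nonzero elements of ker_ℤ(M_G). -/
open MvPolynomial

noncomputable section

/-- The exponent of the variable `t j` in the image of `x i`: it is `1` if the vertex `j`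
is an endpoint of the edge `e i`, and `0` otherwise (incidence vector of the edge `e i`). -/
def incid {n m : ℕ} (e : Fin m → Sym2 (Fin n)) (i : Fin m) (j : Fin n) : ℕ :=
  if j ∈ e i then 1 else 0

/-- The `K`-algebra homomorphism `K[x_1,…,x_m] → K[t_1,…,t_n]` sending `x i` to
`t_j t_k`, where `e i = {v_j, v_k}`. -/
def toricMap (K : Type*) [CommRing K] {n m : ℕ} (e : Fin m → Sym2 (Fin n)) :
    MvPolynomial (Fin m) K →ₐ[K] MvPolynomial (Fin n) K :=
  aeval fun i => ∏ j, X j ^ incid e i j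

/-- The toric ideal `I_G` of the graph with edges `e`. -/
def toricIdeal (K : Type*) [CommRing K] {n m : ℕ} (e : Fin m → Sym2 (Fin n)) :
    Ideal (MvPolynomial (Fin m) K) :=
  RingHom.ker (toricMap K e)

lemma prod_univ_X_pow (K : Type*) [CommRing K] {n : ℕ} (f : Fin n → ℕ) :
    (∏ x, (X x : MvPolynomial (Fin n) K) ^ f x)
      = monomial (Finsupp.equivFunOnFinite.symm f) (1 : K) := by
  rw [← MvPolynomial.prod_X_pow_eq_monomial]
  symm
  apply Finset.prod_subset (Finset.subset_univ _)
  intro x _ hx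
  have h0 : (Finsupp.equivFunOnFinite.symm f) x = 0 := by
    simpa [Finsupp.mem_support_iff] using hx
  rw [h0, pow_zero]

lemma star_of_mem {K : Type*} [Field K] {n m : ℕ} (e : Fin m → Sym2 (Fin n))
    {i j k l : Fin m}
    (hmem : (X i * X j - X k * X l : MvPolynomial (Fin m) K) ∈ toricIdeal K e) :
    ∀ x, incid e i x + incid e j x = incid e k x + incid e l x := by
  have h0 : toricMap K e (X i * X j - X k * X l) = 0 := hmem
  have hXt : ∀ t, toricMap K e (X t) = ∏ x, (X x : MvPolynomial (Fin n) K) ^ incid e t x :=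
    fun t => aeval_X _ t
  have hmul : ∀ t s : Fin m, toricMap K e (X t * X s)
      = monomial (Finsupp.equivFunOnFinite.symm fun x => incid e t x + incid e s x) (1 : K) := by
    intro t s
    rw [map_mul, hXt, hXt, ← Finset.prod_mul_distrib]
    simp_rw [← pow_add]
    exact prod_univ_X_pow K _
  rw [map_sub, sub_eq_zero] at h0
  rw [hmul, hmul] at h0
  have h3 := MvPolynomial.monomial_left_injective (one_ne_zero (α := K)) h0
  have h4 := Finsupp.equivFunOnFinite.symm.injective h3
  exact fun x => congrFun h4 x

lemma incid_mem {n m : ℕ} {e : Fin m → Sym2 (Fin n)} {t : Fin m} {x : Fin n}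
    (h : x ∈ e t) : incid e t x = 1 := if_pos h

lemma incid_not {n m : ℕ} {e : Fin m → Sym2 (Fin n)} {t : Fin m} {x : Fin n}
    (h : x ∉ e t) : incid e t x = 0 := if_neg h

lemma incid_le_one {n m : ℕ} (e : Fin m → Sym2 (Fin n)) (t : Fin m) (x : Fin n) :
    incid e t x ≤ 1 := by unfold incid; split <;> omega

lemma mem_of_incid {n m : ℕ} {e : Fin m → Sym2 (Fin n)} {t : Fin m} {x : Fin n}
    (h : incid e t x ≠ 0) : x ∈ e t := by
  by_contra hc; exact h (incid_not hc)

lemma disj_of_star {n m : ℕ} {e : Fin m → Sym2 (Fin n)} (he : Function.Injective e)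
    (hl : ∀ i, ¬ (e i).IsDiag) {i j k l : Fin m} (hik : i ≠ k) (hil : i ≠ l)
    (hstar : ∀ x, incid e i x + incid e j x = incid e k x + incid e l x) :
    ∀ x, x ∈ e i → x ∈ e j → False := by
  intro x hxi hxj
  have hxk : x ∈ e k := by
    by_contra hc
    have h := hstar x
    rw [incid_mem hxi, incid_mem hxj, incid_not hc] at h
    have := incid_le_one e l x; omega
  set a := Sym2.Mem.other hxi with ha
  have ham : a ∈ e i := Sym2.other_mem hxi
  have hax : a ≠ x := Sym2.other_ne (hl i) hxi
  have heia : s(x, a) = e i := Sym2.other_spec hxi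
  have hkl : a ∈ e k ∨ a ∈ e l := by
    by_contra hc
    push_neg at hc
    have h := hstar a
    rw [incid_mem ham, incid_not hc.1, incid_not hc.2] at h
    omega
  have hxl : x ∈ e l := by
    by_contra hc
    have h := hstar x
    rw [incid_mem hxi, incid_mem hxj, incid_not hc] at h
    have := incid_le_one e k x; omega
  rcases hkl with hak | hal
  · have : e k = s(x, a) := ((Sym2.mem_and_mem_iff hax.symm).mp ⟨hxk, hak⟩)
    exact hik (he (this.trans heia)).symm
  · have : e l = s(x, a) := ((Sym2.mem_and_mem_iff hax.symm).mp ⟨hxl, hal⟩)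
    exact hil (he (this.trans heia)).symm

lemma inner_struct {n m : ℕ} {e : Fin m → Sym2 (Fin n)} (he : Function.Injective e)
    (hl : ∀ i, ¬ (e i).IsDiag) {i j k l : Fin m} {a b c d : Fin n}
    (hik : i ≠ k) (hil : i ≠ l)
    (hstar : ∀ x, incid e i x + incid e j x = incid e k x + incid e l x)
    (hei : e i = s(a, b)) (hej : e j = s(c, d))
    (hab : a ≠ b) (hac : a ≠ c) (had : a ≠ d) (hbc : b ≠ c) (hbd : b ≠ d) (hcd : c ≠ d)
    (hak : a ∈ e k) :
    (e k = s(a, c) ∧ e l = s(b, d)) ∨ (e k = s(a, d) ∧ e l = s(b, c)) := by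
  have hmbi : b ∈ e i := by rw [hei]; exact Sym2.mem_mk_right a b
  have hmcj : c ∈ e j := by rw [hej]; exact Sym2.mem_mk_left c d
  have hmdj : d ∈ e j := by rw [hej]; exact Sym2.mem_mk_right c d
  have hbnj : b ∉ e j := by rw [hej]; simp [Sym2.mem_iff, hbc, hbd]
  have hcni : c ∉ e i := by rw [hei]; simp [Sym2.mem_iff, hac.symm, hbc.symm]
  have hdni : d ∉ e i := by rw [hei]; simp [Sym2.mem_iff, had.symm, hbd.symm]
  set q := Sym2.Mem.other hak with hq
  have hqk : q ∈ e k := Sym2.other_mem hak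
  have hqa : q ≠ a := Sym2.other_ne (hl k) hak
  have hekq : s(a, q) = e k := Sym2.other_spec hak
  have hqmem : q = a ∨ q = b ∨ q = c ∨ q = d := by
    by_contra hc
    push_neg at hc
    have hqi : q ∉ e i := by rw [hei]; simp [Sym2.mem_iff, hc.1, hc.2.1]
    have hqj : q ∉ e j := by rw [hej]; simp [Sym2.mem_iff, hc.2.2.1, hc.2.2.2]
    have h := hstar q
    rw [incid_not hqi, incid_not hqj, incid_mem hqk] at h
    omega
  rcases hqmem with h | h | h | h
  · exact absurd h hqa
  · exfalso
    apply hik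
    apply he
    rw [← hekq, h, ← hei]
  · left
    have hek : e k = s(a, c) := by rw [← hekq, h]
    have hbnk : b ∉ e k := by rw [hek]; simp [Sym2.mem_iff, hab.symm, hbc]
    have hdnk : d ∉ e k := by rw [hek]; simp [Sym2.mem_iff, had.symm, hcd.symm]
    have hbl : b ∈ e l := by
      have h' := hstar b
      rw [incid_mem hmbi, incid_not hbnj, incid_not hbnk] at h'
      exact mem_of_incid (by omega)
    have hdl : d ∈ e l := by
      have h' := hstar d
      rw [incid_not hdni, incid_mem hmdj, incid_not hdnk] at h'
      exact mem_of_incid (by omega)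
    exact ⟨hek, (Sym2.mem_and_mem_iff hbd).mp ⟨hbl, hdl⟩⟩
  · right
    have hek : e k = s(a, d) := by rw [← hekq, h]
    have hbnk : b ∉ e k := by rw [hek]; simp [Sym2.mem_iff, hab.symm, hbd]
    have hcnk : c ∉ e k := by rw [hek]; simp [Sym2.mem_iff, hac.symm, hcd]
    have hbl : b ∈ e l := by
      have h' := hstar b
      rw [incid_mem hmbi, incid_not hbnj, incid_not hbnk] at h'
      exact mem_of_incid (by omega)
    have hcl : c ∈ e l := by
      have h' := hstar c
      rw [incid_not hcni, incid_mem hmcj, incid_not hcnk] at h'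
      exact mem_of_incid (by omega)
    exact ⟨hek, (Sym2.mem_and_mem_iff hbc).mp ⟨hbl, hcl⟩⟩

lemma struct {n m : ℕ} {e : Fin m → Sym2 (Fin n)} (he : Function.Injective e)
    (hl : ∀ i, ¬ (e i).IsDiag) {i j k l : Fin m}
    (hik : i ≠ k) (hil : i ≠ l) (hjk : j ≠ k) (hjl : j ≠ l)
    (hstar : ∀ x, incid e i x + incid e j x = incid e k x + incid e l x) :
    ∃ a b c d : Fin n, a ≠ b ∧ a ≠ c ∧ a ≠ d ∧ b ≠ c ∧ b ≠ d ∧ c ≠ d ∧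
      e i = s(a, b) ∧ e j = s(c, d) ∧ e k = s(a, c) ∧ e l = s(b, d) := by
  have disjij := disj_of_star he hl hik hil hstar
  obtain ⟨a, b, hei⟩ : ∃ a b, e i = s(a, b) :=
    ⟨_, _, (Sym2.other_spec (Sym2.out_fst_mem (e i))).symm⟩
  obtain ⟨c, d, hej⟩ : ∃ c d, e j = s(c, d) :=
    ⟨_, _, (Sym2.other_spec (Sym2.out_fst_mem (e j))).symm⟩
  have hab : a ≠ b := by
    intro h; apply hl i; rw [hei, h]; exact Sym2.mk_isDiag_iff.mpr rfl
  have hcd : c ≠ d := by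
    intro h; apply hl j; rw [hej, h]; exact Sym2.mk_isDiag_iff.mpr rfl
  have hmai : a ∈ e i := by rw [hei]; exact Sym2.mem_mk_left a b
  have hmbi : b ∈ e i := by rw [hei]; exact Sym2.mem_mk_right a b
  have hac : a ≠ c := fun h => disjij a hmai (by rw [hej]; simp [Sym2.mem_iff, h])
  have had : a ≠ d := fun h => disjij a hmai (by rw [hej]; simp [Sym2.mem_iff, h])
  have hbc : b ≠ c := fun h => disjij b hmbi (by rw [hej]; simp [Sym2.mem_iff, h])
  have hbd : b ≠ d := fun h => disjij b hmbi (by rw [hej]; simp [Sym2.mem_iff, h])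
  have hanj : a ∉ e j := by rw [hej]; simp [Sym2.mem_iff, hac, had]
  have hbnj : b ∉ e j := by rw [hej]; simp [Sym2.mem_iff, hbc, hbd]
  by_cases hak : a ∈ e k
  · rcases inner_struct he hl hik hil hstar hei hej hab hac had hbc hbd hcd hak with
      ⟨h1, h2⟩ | ⟨h1, h2⟩
    · exact ⟨a, b, c, d, hab, hac, had, hbc, hbd, hcd, hei, hej, h1, h2⟩
    · exact ⟨a, b, d, c, hab, had, hac, hbd, hbc, hcd.symm, hei,
        hej.trans Sym2.eq_swap, h1, h2⟩
  · have hal : a ∈ e l := by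
      have h := hstar a
      rw [incid_mem hmai, incid_not hanj, incid_not hak] at h
      exact mem_of_incid (by omega)
    have hbnl : b ∉ e l := by
      intro hbl
      apply hil
      apply he
      rw [hei, (Sym2.mem_and_mem_iff hab).mp ⟨hal, hbl⟩]
    have hbk : b ∈ e k := by
      have h := hstar b
      rw [incid_mem hmbi, incid_not hbnj, incid_not hbnl] at h
      exact mem_of_incid (by omega)
    rcases inner_struct he hl hik hil hstar (hei.trans Sym2.eq_swap) hej
      hab.symm hbc hbd hac had hcd hbk with ⟨h1, h2⟩ | ⟨h1, h2⟩
    · exact ⟨b, a, c, d, hab.symm, hbc, hbd, hac, had, hcd,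
        hei.trans Sym2.eq_swap, hej, h1, h2⟩
    · exact ⟨b, a, d, c, hab.symm, hbd, hbc, had, hac, hcd.symm,
        hei.trans Sym2.eq_swap, hej.trans Sym2.eq_swap, h1, h2⟩

/-- If the quadratic binomial `x i * x j - x k * x l` belongs to `I_G`,
with `{i,j} ∩ {k,l} = ∅`, then the corresponding integer vector `u` (with `u i = u j = 1`,
`u k = u l = -1` and all other coordinates `0`) is a circuit of `ker_ℤ(M_G)`: it lies in
the kernel of the incidence matrix, is nonzero, has support minimal with respect to
inclusion among supports of nonzero kernel elements, and has relatively prime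
coordinates. -/
theorem quadratic_binomial_is_circuit {K : Type*} [Field K] [IsAlgClosed K]
    {n m : ℕ} (e : Fin m → Sym2 (Fin n))
    (he : Function.Injective e) (hl : ∀ i, ¬ (e i).IsDiag)
    (hconn : (SimpleGraph.fromEdgeSet (Set.range e)).Connected)
    (i j k l : Fin m) (hdisj : ({i, j} : Set (Fin m)) ∩ {k, l} = ∅)
    (hmem : (X i * X j - X k * X l : MvPolynomial (Fin m) K) ∈ toricIdeal K e)
    (u : Fin m → ℤ)
    (hu : ∀ t, u t = (if t = i then 1 else 0) + (if t = j then 1 else 0)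
      - (if t = k then 1 else 0) - (if t = l then 1 else 0)) :
    (∀ j' : Fin n, ∑ t, (incid e t j' : ℤ) * u t = 0) ∧
    u ≠ 0 ∧
    (∀ v : Fin m → ℤ, v ≠ 0 → (∀ j' : Fin n, ∑ t, (incid e t j' : ℤ) * v t = 0) →
      {t | v t ≠ 0} ⊆ {t | u t ≠ 0} → {t | v t ≠ 0} = {t | u t ≠ 0}) ∧
    Finset.univ.gcd u = 1 := by
  have hstar := star_of_mem e hmem
  -- index inequalities from hdisj
  have hnot : ∀ t, t ∈ ({i, j} : Set (Fin m)) → t ∉ ({k, l} : Set (Fin m)) := by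
    intro t h1 h2
    have : t ∈ ({i, j} : Set (Fin m)) ∩ {k, l} := ⟨h1, h2⟩
    rw [hdisj] at this
    exact this
  have hik : i ≠ k := fun h => hnot i (Or.inl rfl) (Or.inl h)
  have hil : i ≠ l := fun h => hnot i (Or.inl rfl) (Or.inr h)
  have hjk : j ≠ k := fun h => hnot j (Or.inr rfl) (Or.inl h)
  have hjl : j ≠ l := fun h => hnot j (Or.inr rfl) (Or.inr h)
  obtain ⟨a, b, c, d, hab, hac, had, hbc, hbd, hcd, hei, hej, hek, hel⟩ :=
    struct he hl hik hil hjk hjl hstar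
  -- membership facts
  have hmai : a ∈ e i := by rw [hei]; exact Sym2.mem_mk_left a b
  have hmbi : b ∈ e i := by rw [hei]; exact Sym2.mem_mk_right a b
  have hmcj : c ∈ e j := by rw [hej]; exact Sym2.mem_mk_left c d
  have hmdj : d ∈ e j := by rw [hej]; exact Sym2.mem_mk_right c d
  have hmak : a ∈ e k := by rw [hek]; exact Sym2.mem_mk_left a c
  have hmck : c ∈ e k := by rw [hek]; exact Sym2.mem_mk_right a c
  have hmbl : b ∈ e l := by rw [hel]; exact Sym2.mem_mk_left b d
  have hmdl : d ∈ e l := by rw [hel]; exact Sym2.mem_mk_right b d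
  have hanj : a ∉ e j := by rw [hej]; simp [Sym2.mem_iff, hac, had]
  have hbnj : b ∉ e j := by rw [hej]; simp [Sym2.mem_iff, hbc, hbd]
  have hcni : c ∉ e i := by rw [hei]; simp [Sym2.mem_iff, hac.symm, hbc.symm]
  have hdni : d ∉ e i := by rw [hei]; simp [Sym2.mem_iff, had.symm, hbd.symm]
  have hbnk : b ∉ e k := by rw [hek]; simp [Sym2.mem_iff, hab.symm, hbc]
  have hdnk : d ∉ e k := by rw [hek]; simp [Sym2.mem_iff, had.symm, hcd.symm]
  have hanl : a ∉ e l := by rw [hel]; simp [Sym2.mem_iff, hab, had]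
  have hcnl : c ∉ e l := by rw [hel]; simp [Sym2.mem_iff, hbc.symm, hcd]
  -- i ≠ j and k ≠ l
  have hij : i ≠ j := fun h => hanj (h ▸ hmai)
  have hkl : k ≠ l := fun h => hanl (h ▸ hmak)
  -- values of u
  have hui : u i = 1 := by rw [hu i]; simp [hij, hik, hil]
  have huj : u j = 1 := by rw [hu j]; simp [hij.symm, hjk, hjl]
  have huk : u k = -1 := by rw [hu k]; simp [hik.symm, hjk.symm, hkl]
  have hul : u l = -1 := by rw [hu l]; simp [hil.symm, hjl.symm, hkl.symm]
  have hu0 : ∀ t, t ≠ i → t ≠ j → t ≠ k → t ≠ l → u t = 0 := by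
    intro t h1 h2 h3 h4; rw [hu t]; simp [h1, h2, h3, h4]
  -- sum reduction
  have hsum : ∀ (w : Fin m → ℤ), (∀ t, t ≠ i → t ≠ j → t ≠ k → t ≠ l → w t = 0) →
      ∀ x, ∑ t, (incid e t x : ℤ) * w t =
        (incid e i x : ℤ) * w i + (incid e j x : ℤ) * w j
          + (incid e k x : ℤ) * w k + (incid e l x : ℤ) * w l := by
    intro w hw x
    rw [← Finset.sum_subset (Finset.subset_univ ({i, j, k, l} : Finset (Fin m)))]
    · rw [Finset.sum_insert (by simp [hij, hik, hil]),
        Finset.sum_insert (by simp [hjk, hjl]), Finset.sum_pair hkl]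
      ring
    · intro t _ ht
      simp only [Finset.mem_insert, Finset.mem_singleton] at ht
      push_neg at ht
      rw [hw t ht.1 ht.2.1 ht.2.2.1 ht.2.2.2, mul_zero]
  refine ⟨?_, ?_, ?_, ?_⟩
  · intro x
    rw [hsum u hu0 x, hui, huj, huk, hul]
    have h := hstar x
    simp only [mul_one, mul_neg_one]
    omega
  · intro h
    have := congrFun h i
    rw [hui] at this
    exact one_ne_zero this
  · intro v hv hker hsub
    have hv0 : ∀ t, t ≠ i → t ≠ j → t ≠ k → t ≠ l → v t = 0 := by
      intro t h1 h2 h3 h4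
      by_contra hvt
      exact (hsub hvt) (hu0 t h1 h2 h3 h4)
    have hk4 : ∀ x, (incid e i x : ℤ) * v i + (incid e j x : ℤ) * v j
        + (incid e k x : ℤ) * v k + (incid e l x : ℤ) * v l = 0 := by
      intro x
      rw [← hsum v hv0 x]
      exact hker x
    have ea := hk4 a
    rw [incid_mem hmai, incid_mem hmak, incid_not hanj, incid_not hanl] at ea
    have eb := hk4 b
    rw [incid_mem hmbi, incid_mem hmbl, incid_not hbnj, incid_not hbnk] at eb
    have ec := hk4 c
    rw [incid_mem hmcj, incid_mem hmck, incid_not hcni, incid_not hcnl] at ec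
    have ed := hk4 d
    rw [incid_mem hmdj, incid_mem hmdl, incid_not hdni, incid_not hdnk] at ed
    push_cast at ea eb ec ed
    have hvi : v i ≠ 0 := by
      intro h0
      apply hv
      funext t
      simp only [Pi.zero_apply]
      by_cases h1 : t = i; · rw [h1]; exact h0
      by_cases h2 : t = j; · rw [h2]; omega
      by_cases h3 : t = k; · rw [h3]; omega
      by_cases h4 : t = l; · rw [h4]; omega
      exact hv0 t h1 h2 h3 h4
    apply Set.Subset.antisymm hsub
    intro t ht
    simp only [Set.mem_setOf_eq] at ht ⊢
    by_cases h1 : t = i; · rw [h1]; exact hvi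
    by_cases h2 : t = j; · rw [h2]; intro h0; apply hvi; omega
    by_cases h3 : t = k; · rw [h3]; intro h0; apply hvi; omega
    by_cases h4 : t = l; · rw [h4]; intro h0; apply hvi; omega
    exact absurd (hu0 t h1 h2 h3 h4) ht
  · have hg : Finset.univ.gcd u ∣ u i := Finset.gcd_dvd (Finset.mem_univ i)
    rw [hui] at hg
    have hunit : IsUnit (Finset.univ.gcd u) := isUnit_of_dvd_one hg
    rw [← Finset.normalize_gcd]
    exact normalize_eq_one.mpr hunit
end
end

section
/- Let Γ = (e_i, e_p, e_j, e_q) be a cycle of length 4 of a finite connected simple graph G, and let H be the induced subgraph of G on the four vertices of Γ. Assume H is not a complete graph. Then for every nonzero polynomial F in the toric ideal I_H, there exist monomials M and N appearing (with nonzero coefficient) in F such that x_i x_j divides M and x_p x_q divides N. -/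
open MvPolynomial

noncomputable section

/-- The toric map of the subgraph of `G` consisting of the edges `e l` with `P l`. -/
def subToricMap (K : Type*) [CommRing K] {n m : ℕ} (e : Fin m → Sym2 (Fin n))
    (P : Fin m → Prop) : MvPolynomial {l : Fin m // P l} K →ₐ[K] MvPolynomial (Fin n) K :=
  aeval fun l => ∏ j, X j ^ incid e l.1 j

/-- The toric ideal `I_H ⊆ K[x_l : e_l ∈ E(H)]` of the subgraph of `G` consisting of the
edges `e l` with `P l`. -/
def subToricIdeal (K : Type*) [CommRing K] {n m : ℕ} (e : Fin m → Sym2 (Fin n))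
    (P : Fin m → Prop) : Ideal (MvPolynomial {l : Fin m // P l} K) :=
  RingHom.ker (subToricMap K e P)

open Finsupp Function

/-! The toric map sends the monomial `x^M` to `t^(deg M)`, where `deg M v` counts the edges of `M`
at `v` with multiplicity, so a nonzero `F` in the kernel has two distinct monomials `x^M`, `x^N`
with `deg M = deg N`. As `H` is not complete it misses a diagonal, say `v₂v₄`, so besides the four
cycle edges it has at most the chord `v₁v₃`. The degrees at `v₂` and `v₄` give
`δ_i = -δ_p` and `δ_j = -δ_q` for `δ = N - M`, and those at `v₁` and `v₃` then force `δ_i = δ_j`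
and `δ = 0` on the chord. So `δ` takes the values `t, -t, t, -t` on `i, p, j, q` with `t ≠ 0`, and
one of `M`, `N` is divisible by `x_i x_j`, the other by `x_p x_q`. -/

theorem prod_X_pow_eq_monomial_equivFunOnFinite {R σ : Type*} [CommSemiring R] [Fintype σ]
    (d : σ → ℕ) : ∏ j, (X j : MvPolynomial σ R) ^ d j = monomial (equivFunOnFinite.symm d) 1 := by
  rw [monomial_eq, C_1, one_mul, Finsupp.prod_fintype _ _ fun _ => pow_zero _]
  rfl

theorem single_add_single_le {κ : Type*} {x y : κ} (hxy : x ≠ y) {M : κ →₀ ℕ}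
    (hx : 0 < M x) (hy : 0 < M y) : single x 1 + single y 1 ≤ M := by
  classical
  intro l
  simp only [Finsupp.coe_add, Pi.add_apply, single_apply]
  split_ifs with h₁ h₂ h₂
  · exact absurd (h₁.trans h₂.symm) hxy
  all_goals subst_vars; omega

section MonomialMaps

variable {R ι σ : Type*} [CommSemiring R]

theorem aeval_monomial_monomial (w : ι → σ →₀ ℕ) (M : ι →₀ ℕ) (r : R) :
    aeval (fun l => monomial (w l) (1 : R)) (monomial M r) =
      monomial (linearCombination ℕ w M) r := by
  simp only [aeval_monomial, linearCombination_apply, monomial_finsupp_sum_index, algebraMap_eq,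
    monomial_pow, one_pow]

theorem exists_ne_mem_support_linearCombination_eq (w : ι → σ →₀ ℕ) {F : MvPolynomial ι R}
    (hF : aeval (fun l => monomial (w l) (1 : R)) F = 0) {M : ι →₀ ℕ} (hM : M ∈ F.support) :
    ∃ N ∈ F.support, N ≠ M ∧ linearCombination ℕ w N = linearCombination ℕ w M := by
  classical
  by_contra! hsep
  have hcoeff : coeff (linearCombination ℕ w M) (aeval (fun l => monomial (w l) (1 : R)) F) =
      coeff M F := by
    conv_lhs => rw [F.as_sum]
    rw [map_sum, coeff_sum, Finset.sum_eq_single M]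
    · rw [aeval_monomial_monomial, coeff_monomial, if_pos rfl]
    · intro N hN hNM
      rw [aeval_monomial_monomial, coeff_monomial, if_neg (hsep N hN hNM)]
    · exact fun h => absurd hM h
  rw [hF, coeff_zero] at hcoeff
  exact MvPolynomial.mem_support_iff.mp hM hcoeff.symm

end MonomialMaps

section EdgeExponents

variable {ι V : Type*} [DecidableEq V] (f : ι → Sym2 V)

def vertexDegree (M : ι →₀ ℕ) (v : V) : ℕ := ∑ l ∈ M.support with v ∈ f l, M l

def edgeWeight (M : ι →₀ ℕ) (z : Sym2 V) : ℕ := ∑ l ∈ M.support with f l = z, M l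

variable {f}

theorem edgeWeight_apply_self (hf : Injective f) (M : ι →₀ ℕ) (l : ι) :
    edgeWeight f M (f l) = M l := by
  classical
  simp only [edgeWeight, Finset.sum_filter, hf.eq_iff]
  exact Finsupp.sum_ite_self_eq' M l

theorem vertexDegree_eq_sum_edgeWeight {v : V} {Z : Finset (Sym2 V)}
    (hZ : ∀ l, v ∈ f l ↔ f l ∈ Z) (M : ι →₀ ℕ) :
    vertexDegree f M v = ∑ z ∈ Z, edgeWeight f M z := by
  simp only [vertexDegree, edgeWeight, Finset.sum_filter]
  rw [Finset.sum_comm]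
  simp only [Finset.sum_ite_eq, hZ]

end EdgeExponents

section FourVertices

variable {V : Type*} {u₁ u₂ u₃ u₄ : V}

theorem mem_cycle_edges_or_diagonals {z : Sym2 V} (hz : ¬ z.IsDiag)
    (hW : ∀ v ∈ z, v ∈ ({u₁, u₂, u₃, u₄} : Set V)) :
    z ∈ ({s(u₁, u₂), s(u₂, u₃), s(u₃, u₄), s(u₄, u₁), s(u₁, u₃), s(u₂, u₄)} : Set (Sym2 V)) := by
  induction z using Sym2.ind with
  | _ x y =>
    have hx := hW x (Sym2.mem_mk_left x y)
    have hy := hW y (Sym2.mem_mk_right x y)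
    simp only [Set.mem_insert_iff, Set.mem_singleton_iff] at hx hy ⊢
    rcases hx with rfl | rfl | rfl | rfl <;> rcases hy with rfl | rfl | rfl | rfl <;>
      simp_all [Sym2.eq_swap]

theorem diagonal_not_mem_range_of_not_complete {ι : Type*} {e : ι → Sym2 V} {a b c d : ι}
    (ha : e a = s(u₁, u₂)) (hb : e b = s(u₂, u₃)) (hc : e c = s(u₃, u₄)) (hd : e d = s(u₄, u₁))
    (hnc : ¬ ∀ x ∈ ({u₁, u₂, u₃, u₄} : Set V), ∀ y ∈ ({u₁, u₂, u₃, u₄} : Set V), x ≠ y →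
      ∃ t, e t = s(x, y)) :
    s(u₁, u₃) ∉ Set.range e ∨ s(u₂, u₄) ∉ Set.range e := by
  push Not at hnc
  obtain ⟨x, hx, y, hy, hxy, hmiss⟩ := hnc
  have hxy' : ∀ v ∈ s(x, y), v ∈ ({u₁, u₂, u₃, u₄} : Set V) := by
    simp only [Sym2.mem_iff]
    rintro v (rfl | rfl) <;> assumption
  have hnr : s(x, y) ∉ Set.range e := fun ⟨t, ht⟩ => hmiss t ht
  have h := mem_cycle_edges_or_diagonals (Sym2.mk_isDiag_iff.not.mpr hxy) hxy'
  simp only [Set.mem_insert_iff, Set.mem_singleton_iff] at h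
  rcases h with h | h | h | h | h | h <;> rw [h] at hnr
  exacts [absurd ⟨a, ha⟩ hnr, absurd ⟨b, hb⟩ hnr, absurd ⟨c, hc⟩ hnr, absurd ⟨d, hd⟩ hnr,
    .inl hnr, .inr hnr]

end FourVertices

section FourCycle

variable {ι V : Type*} [DecidableEq V] {f : ι → Sym2 V} {u₁ u₂ u₃ u₄ : V} {a b c d : ι}

theorem vertexDegree_four_cycle (hf : Injective f)
    (hu : u₁ ≠ u₂ ∧ u₁ ≠ u₃ ∧ u₁ ≠ u₄ ∧ u₂ ≠ u₃ ∧ u₂ ≠ u₄ ∧ u₃ ≠ u₄)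
    (ha : f a = s(u₁, u₂)) (hb : f b = s(u₂, u₃)) (hc : f c = s(u₃, u₄)) (hd : f d = s(u₄, u₁))
    (hcases : ∀ l, f l ∈ ({s(u₁, u₂), s(u₂, u₃), s(u₃, u₄), s(u₄, u₁), s(u₁, u₃)} : Set (Sym2 V)))
    (M : ι →₀ ℕ) :
    vertexDegree f M u₁ = M a + M d + edgeWeight f M s(u₁, u₃) ∧
      vertexDegree f M u₂ = M a + M b ∧
      vertexDegree f M u₃ = M b + M c + edgeWeight f M s(u₁, u₃) ∧
      vertexDegree f M u₄ = M c + M d := by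
  obtain ⟨h12, h13, h14, h23, h24, h34⟩ := hu
  have hdeg : ∀ v (Z : Finset (Sym2 V)),
      (∀ z ∈ ({s(u₁, u₂), s(u₂, u₃), s(u₃, u₄), s(u₄, u₁), s(u₁, u₃)} : Set (Sym2 V)),
        v ∈ z ↔ z ∈ Z) → vertexDegree f M v = ∑ z ∈ Z, edgeWeight f M z :=
    fun v Z hZ => vertexDegree_eq_sum_edgeWeight (fun l => hZ _ (hcases l)) M
  simp only [← edgeWeight_apply_self hf M, ha, hb, hc, hd]
  refine ⟨(hdeg _ {s(u₁, u₂), s(u₄, u₁), s(u₁, u₃)} ?_).trans ?_,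
    (hdeg _ {s(u₁, u₂), s(u₂, u₃)} ?_).trans ?_,
    (hdeg _ {s(u₂, u₃), s(u₃, u₄), s(u₁, u₃)} ?_).trans ?_,
    (hdeg _ {s(u₃, u₄), s(u₄, u₁)} ?_).trans ?_⟩ <;>
    simp [Finset.sum_insert, h12, h13, h14, h23, h24, h34, h12.symm, h13.symm, h14.symm, h23.symm,
      h24.symm, h34.symm, add_assoc]

theorem single_add_single_le_of_vertexDegree_eq (hf : Injective f)
    (hu : u₁ ≠ u₂ ∧ u₁ ≠ u₃ ∧ u₁ ≠ u₄ ∧ u₂ ≠ u₃ ∧ u₂ ≠ u₄ ∧ u₃ ≠ u₄)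
    (ha : f a = s(u₁, u₂)) (hb : f b = s(u₂, u₃)) (hc : f c = s(u₃, u₄)) (hd : f d = s(u₄, u₁))
    (hl : ∀ l, ¬ (f l).IsDiag) (hW : ∀ l, ∀ v ∈ f l, v ∈ ({u₁, u₂, u₃, u₄} : Set V))
    (hchord : s(u₂, u₄) ∉ Set.range f) {M N : ι →₀ ℕ}
    (hdeg : vertexDegree f M = vertexDegree f N) (hne : M ≠ N) :
    (single a 1 + single c 1 ≤ M ∧ single b 1 + single d 1 ≤ N) ∨
      (single a 1 + single c 1 ≤ N ∧ single b 1 + single d 1 ≤ M) := by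
  have hcases : ∀ l,
      f l ∈ ({s(u₁, u₂), s(u₂, u₃), s(u₃, u₄), s(u₄, u₁), s(u₁, u₃)} : Set (Sym2 V)) := by
    intro l
    have h := mem_cycle_edges_or_diagonals (hl l) (hW l)
    have h₂₄ : f l ≠ s(u₂, u₄) := fun h => hchord ⟨l, h⟩
    simp only [Set.mem_insert_iff, Set.mem_singleton_iff] at h ⊢
    tauto
  obtain ⟨hM₁, hM₂, hM₃, hM₄⟩ := vertexDegree_four_cycle hf hu ha hb hc hd hcases M
  obtain ⟨hN₁, hN₂, hN₃, hN₄⟩ := vertexDegree_four_cycle hf hu ha hb hc hd hcases N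
  have h₁ := congrFun hdeg u₁
  have h₂ := congrFun hdeg u₂
  have h₃ := congrFun hdeg u₃
  have h₄ := congrFun hdeg u₄
  obtain ⟨h12, h13, h14, h23, h24, h34⟩ := hu
  have hac : a ≠ c := fun h => by simp [h, hc, h13.symm, h23.symm] at ha
  have hbd : b ≠ d := fun h => by simp [h, hd, h24.symm, h34.symm] at hb
  rcases lt_trichotomy (M a) (N a) with h | h | h
  · exact .inr ⟨single_add_single_le hac (by omega) (by omega),
      single_add_single_le hbd (by omega) (by omega)⟩
  · refine absurd (Finsupp.ext fun l => ?_) hne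
    simp only [← ha, ← hb, ← hc, ← hd, hf.eq_iff, Set.mem_insert_iff, Set.mem_singleton_iff]
      at hcases
    rcases hcases l with rfl | rfl | rfl | rfl | hchord_l
    any_goals omega
    rw [← edgeWeight_apply_self hf M, ← edgeWeight_apply_self hf N, hchord_l]
    omega
  · exact .inl ⟨single_add_single_le hac (by omega) (by omega),
      single_add_single_le hbd (by omega) (by omega)⟩

end FourCycle

theorem exists_ne_mem_support_vertexDegree_eq {K : Type*} [CommRing K] {n m : ℕ}
    {e : Fin m → Sym2 (Fin n)} {P : Fin m → Prop} {F : MvPolynomial {l // P l} K}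
    (hF : F ∈ subToricIdeal K e P) {M : {l // P l} →₀ ℕ} (hM : M ∈ F.support) :
    ∃ N ∈ F.support, N ≠ M ∧ vertexDegree (fun l => e l.1) N = vertexDegree (fun l => e l.1) M := by
  have hmap : subToricMap K e P =
      aeval fun l => monomial (equivFunOnFinite.symm (incid e l.1)) 1 := by
    simp only [subToricMap, prod_X_pow_eq_monomial_equivFunOnFinite]
  rw [subToricIdeal, RingHom.mem_ker, hmap] at hF
  obtain ⟨N, hN, hNM, hw⟩ := exists_ne_mem_support_linearCombination_eq _ hF hM
  refine ⟨N, hN, hNM, funext fun v => ?_⟩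
  simpa [linearCombination_apply, vertexDegree, incid, Finset.sum_filter, Finsupp.sum]
    using DFunLike.congr_fun hw v

theorem monomials_of_nonzero_poly_in_cycle_ideal_general {K : Type*} [Field K]
    {n m : ℕ} (e : Fin m → Sym2 (Fin n))
    (he : Function.Injective e) (hl : ∀ i, ¬ (e i).IsDiag)
    (v₁ v₂ v₃ v₄ : Fin n) (hv : v₁ ≠ v₂ ∧ v₁ ≠ v₃ ∧ v₁ ≠ v₄ ∧ v₂ ≠ v₃ ∧ v₂ ≠ v₄ ∧ v₃ ≠ v₄)
    (i p j q : Fin m)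
    (hΓ : e i = s(v₁, v₂) ∧ e p = s(v₂, v₃) ∧ e j = s(v₃, v₄) ∧ e q = s(v₄, v₁))
    (W : Set (Fin n)) (hW : W = {v₁, v₂, v₃, v₄})
    (P : Fin m → Prop) (hP : ∀ l, P l ↔ ∀ v ∈ e l, v ∈ W)
    (hPi : P i) (hPp : P p) (hPj : P j) (hPq : P q)
    (hnotcomplete : ¬ ∀ x ∈ W, ∀ y ∈ W, x ≠ y → ∃ t : Fin m, e t = s(x, y))
    (F : MvPolynomial {l : Fin m // P l} K) (hF : F ∈ subToricIdeal K e P) (hF0 : F ≠ 0) :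
    (∃ M ∈ F.support, Finsupp.single (⟨i, hPi⟩ : {l : Fin m // P l}) 1 +
        Finsupp.single (⟨j, hPj⟩ : {l : Fin m // P l}) 1 ≤ M) ∧
    (∃ N ∈ F.support, Finsupp.single (⟨p, hPp⟩ : {l : Fin m // P l}) 1 +
        Finsupp.single (⟨q, hPq⟩ : {l : Fin m // P l}) 1 ≤ N) := by
  obtain ⟨hei, hep, hej, heq⟩ := hΓ
  obtain ⟨h12, h13, h14, h23, h24, h34⟩ := hv
  subst hW
  have hf : Injective fun l : {l // P l} => e l.1 := fun l l' h => Subtype.ext (he h)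
  have hedge (l : {l // P l}) : ∀ v ∈ e l.1, v ∈ ({v₁, v₂, v₃, v₄} : Set (Fin n)) := (hP l).1 l.2
  obtain ⟨M, hM⟩ := support_nonempty.2 hF0
  obtain ⟨N, hN, hNM, hdeg⟩ := exists_ne_mem_support_vertexDegree_eq hF hM
  rcases diagonal_not_mem_range_of_not_complete hei hep hej heq hnotcomplete with h₁₃ | h₂₄
  · -- rotate the cycle to `(v₂, v₃, v₄, v₁)`, whose missing diagonal is `s(v₃, v₁)`
    have hrot (l : {l // P l}) : ∀ v ∈ e l.1, v ∈ ({v₂, v₃, v₄, v₁} : Set (Fin n)) := by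
      intro v hv
      have := hedge l v hv
      simp only [Set.mem_insert_iff, Set.mem_singleton_iff] at this ⊢
      tauto
    rcases single_add_single_le_of_vertexDegree_eq (a := ⟨p, hPp⟩) (b := ⟨j, hPj⟩)
      (c := ⟨q, hPq⟩) (d := ⟨i, hPi⟩) hf ⟨h23, h24, h12.symm, h34, h13.symm, h14.symm⟩
      hep hej heq hei (fun l => hl l.1) hrot
      (fun ⟨l, hl'⟩ => h₁₃ ⟨l.1, hl'.trans Sym2.eq_swap⟩) hdeg hNM with ⟨hpq, hji⟩ | ⟨hpq, hji⟩
    · exact ⟨⟨M, hM, add_comm (single _ 1) _ ▸ hji⟩, ⟨N, hN, hpq⟩⟩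
    · exact ⟨⟨N, hN, add_comm (single _ 1) _ ▸ hji⟩, ⟨M, hM, hpq⟩⟩
  · rcases single_add_single_le_of_vertexDegree_eq (a := ⟨i, hPi⟩) (b := ⟨p, hPp⟩)
      (c := ⟨j, hPj⟩) (d := ⟨q, hPq⟩) hf ⟨h12, h13, h14, h23, h24, h34⟩
      hei hep hej heq (fun l => hl l.1) hedge
      (fun ⟨l, hl'⟩ => h₂₄ ⟨l.1, hl'⟩) hdeg hNM with ⟨hij, hpq⟩ | ⟨hij, hpq⟩
    · exact ⟨⟨N, hN, hij⟩, ⟨M, hM, hpq⟩⟩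
    · exact ⟨⟨M, hM, hij⟩, ⟨N, hN, hpq⟩⟩

/-- Let `Γ = (e i, e p, e j, e q)` be a 4-cycle of `G` and let `H` be the
induced subgraph of `G` on the four vertices of `Γ`.  If `H` is not a complete graph, then
every nonzero polynomial `F ∈ I_H` has a monomial divisible by `x i * x j` and a monomial
divisible by `x p * x q`. -/
theorem monomials_of_nonzero_poly_in_cycle_ideal {K : Type*} [Field K] [IsAlgClosed K]
    {n m : ℕ} (e : Fin m → Sym2 (Fin n))
    (he : Function.Injective e) (hl : ∀ i, ¬ (e i).IsDiag)
    (hconn : (SimpleGraph.fromEdgeSet (Set.range e)).Connected)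
    (v₁ v₂ v₃ v₄ : Fin n) (hv : v₁ ≠ v₂ ∧ v₁ ≠ v₃ ∧ v₁ ≠ v₄ ∧ v₂ ≠ v₃ ∧ v₂ ≠ v₄ ∧ v₃ ≠ v₄)
    (i p j q : Fin m)
    (hΓ : e i = s(v₁, v₂) ∧ e p = s(v₂, v₃) ∧ e j = s(v₃, v₄) ∧ e q = s(v₄, v₁))
    (W : Set (Fin n)) (hW : W = {v₁, v₂, v₃, v₄})
    (P : Fin m → Prop) (hP : ∀ l, P l ↔ ∀ v ∈ e l, v ∈ W)
    (hPi : P i) (hPp : P p) (hPj : P j) (hPq : P q)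
    (hnotcomplete : ¬ ∀ x ∈ W, ∀ y ∈ W, x ≠ y → ∃ t : Fin m, e t = s(x, y))
    (F : MvPolynomial {l : Fin m // P l} K) (hF : F ∈ subToricIdeal K e P) (hF0 : F ≠ 0) :
    (∃ M ∈ F.support, Finsupp.single (⟨i, hPi⟩ : {l : Fin m // P l}) 1 +
        Finsupp.single (⟨j, hPj⟩ : {l : Fin m // P l}) 1 ≤ M) ∧
    (∃ N ∈ F.support, Finsupp.single (⟨p, hPp⟩ : {l : Fin m // P l}) 1 +
        Finsupp.single (⟨q, hPq⟩ : {l : Fin m // P l}) 1 ≤ N) :=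
  monomials_of_nonzero_poly_in_cycle_ideal_general e he hl v₁ v₂ v₃ v₄ hv i p j q hΓ W hW P hP hPi
    hPp hPj hPq hnotcomplete F hF hF0
end
end

section
/- Let G be a finite connected simple graph, Γ a cycle of G of length 4, and H the induced subgraph of G on the vertex set of Γ. If F ⊆ I_G is a set of G-homogeneous polynomials which generates I_G up to radical (i.e., rad of the ideal generated by F equals I_G), then F ∩ K[x_i : e_i ∈ E(H)] generates the toric ideal I_H up to radical in the polynomial ring K[x_i : e_i ∈ E(H)]. -/
open MvPolynomial

noncomputable section

/-- The `G`-degree of an exponent vector `u`: `deg_G(x^u) = u_1 a_1 + ⋯ + u_m a_m ∈ ℤ^n`. -/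
def degG {n m : ℕ} (e : Fin m → Sym2 (Fin n)) (u : Fin m →₀ ℕ) : Fin n → ℤ :=
  fun j => ∑ i, (u i : ℤ) * (incid e i j : ℤ)

/-- A polynomial is `G`-homogeneous if all monomials appearing in it have the same
`G`-degree. -/
def IsGHomogeneous {K : Type*} [CommRing K] {n m : ℕ} (e : Fin m → Sym2 (Fin n))
    (p : MvPolynomial (Fin m) K) : Prop :=
  ∀ u ∈ p.support, ∀ v ∈ p.support, degG e u = degG e v

/-! `killCompl`, which sends the variables of the edges outside `H` to `0`, is a left inverse of
the inclusion `K[E(H)] → K[E(G)]`. As `H` is induced, a monomial lies in `K[E(H)]` iff its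
`G`-degree vanishes off `V(H)`; so by `G`-homogeneity each `f ∈ F` either lies in `K[E(H)]` or
is killed. Hence `killCompl` maps `(F)` into `(F ∩ K[E(H)])`, and applying it to `g ^ k ∈ (F)`
for `g ∈ I_H` shows `I_H ⊆ rad (F ∩ K[E(H)])`. The other inclusion holds as `I_H` is prime. -/

namespace MvPolynomial

variable {R σ τ : Type*} [CommRing R] {f : σ → τ} (hf : Function.Injective f)

theorem killCompl_eq_zero_of_forall_not_subset_range {p : MvPolynomial τ R}
    (hp : ∀ s ∈ p.support, ¬ ↑s.support ⊆ Set.range f) : killCompl hf p = 0 := by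
  rw [p.as_sum, map_sum]
  exact Finset.sum_eq_zero fun s hs => killCompl_monomial_eq_zero_of_not_subset hf _ (hp s hs)

theorem rename_killCompl_of_vars_subset_range {p : MvPolynomial τ R}
    (hp : ↑p.vars ⊆ Set.range f) : rename f (killCompl hf p) = p := by
  obtain ⟨q, rfl⟩ := exists_rename_eq_of_vars_subset_range p f hf hp
  rw [killCompl_rename_app]

end MvPolynomial

section Toric

variable {K : Type*} [CommRing K] {n m : ℕ} {e : Fin m → Sym2 (Fin n)}

theorem degG_eq_zero_iff {u : Fin m →₀ ℕ} {j : Fin n} :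
    degG e u j = 0 ↔ ∀ l ∈ u.support, j ∉ e l := by
  simp only [degG, incid]
  rw [Finset.sum_eq_zero_iff_of_nonneg fun _ _ => by positivity]
  simp only [Finset.mem_univ, mul_eq_zero, Nat.cast_eq_zero, Nat.cast_ite, Nat.cast_one,
    Nat.cast_zero, ite_eq_right_iff, one_ne_zero, imp_false, forall_const, Finsupp.mem_support_iff]
  exact forall_congr' fun _ => by tauto

variable {W : Set (Fin n)} {P : Fin m → Prop}

theorem forall_support_iff_degG_eq_zero (hP : ∀ l, P l ↔ ∀ v ∈ e l, v ∈ W)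
    (u : Fin m →₀ ℕ) : (∀ l ∈ u.support, P l) ↔ ∀ j ∉ W, degG e u j = 0 := by
  simp only [hP, degG_eq_zero_iff]
  exact ⟨fun h j hj l hl hjl => hj (h l hl j hjl),
    fun h l hl j hjl => by_contra fun hj => h j hj l hl hjl⟩

theorem IsGHomogeneous.forall_support_of_mem_support {f : MvPolynomial (Fin m) K}
    (hf : IsGHomogeneous e f) (hP : ∀ l, P l ↔ ∀ v ∈ e l, v ∈ W) {u v : Fin m →₀ ℕ}
    (hu : u ∈ f.support) (hv : v ∈ f.support) (huP : ∀ l ∈ u.support, P l) :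
    ∀ l ∈ v.support, P l := by
  rw [forall_support_iff_degG_eq_zero hP] at huP ⊢
  rwa [hf v hv u hu]

theorem IsGHomogeneous.killCompl_eq_zero_or_rename_killCompl_eq {f : MvPolynomial (Fin m) K}
    (hf : IsGHomogeneous e f) (hP : ∀ l, P l ↔ ∀ v ∈ e l, v ∈ W) :
    killCompl (Subtype.val_injective (p := P)) f = 0 ∨
      rename Subtype.val (killCompl (Subtype.val_injective (p := P)) f) = f := by
  by_cases hvars : ↑f.vars ⊆ Set.range (Subtype.val : {l // P l} → Fin m)
  · exact Or.inr (rename_killCompl_of_vars_subset_range _ hvars)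
  refine Or.inl <| killCompl_eq_zero_of_forall_not_subset_range _ fun u hu huP =>
    hvars fun l hl => ?_
  obtain ⟨v, hv, hlv⟩ := (mem_vars_iff_mem_support l).1 hl
  have hvP := hf.forall_support_of_mem_support hP hu hv fun l hl => by simpa using huP hl
  simpa using hvP l hlv

theorem subToricIdeal_eq_comap (P : Fin m → Prop) :
    subToricIdeal K e P = (toricIdeal K e).comap (rename Subtype.val) := by
  ext g
  simp only [subToricIdeal, toricIdeal, Ideal.mem_comap, RingHom.mem_ker, subToricMap, toricMap,
    aeval_rename]
  rfl

theorem subToricIdeal_isPrime [IsDomain K] (P : Fin m → Prop) : (subToricIdeal K e P).IsPrime :=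
  RingHom.ker_isPrime _

end Toric

theorem subToricIdeal_radical_generation_general {K : Type*} [Field K]
    {n m : ℕ} (e : Fin m → Sym2 (Fin n))
    (W : Set (Fin n))
    (P : Fin m → Prop) (hP : ∀ l, P l ↔ ∀ v ∈ e l, v ∈ W)
    (F : Set (MvPolynomial (Fin m) K))
    (hFhom : ∀ f ∈ F, IsGHomogeneous e f)
    (hFrad : (Ideal.span F).radical = toricIdeal K e) :
    (Ideal.span {g : MvPolynomial {l : Fin m // P l} K |
        rename (Subtype.val : {l : Fin m // P l} → Fin m) g ∈ F}).radical =
      subToricIdeal K e P := by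
  set S := {g : MvPolynomial {l : Fin m // P l} K | rename Subtype.val g ∈ F}
  have hkill :
      (Ideal.span F).map (killCompl (Subtype.val_injective (p := P))) ≤ Ideal.span S := by
    rw [Ideal.map_span, Ideal.span_le]
    rintro _ ⟨f, hf, rfl⟩
    rcases (hFhom f hf).killCompl_eq_zero_or_rename_killCompl_eq hP with h | h
    · simp [h]
    · exact Ideal.subset_span (show rename Subtype.val _ ∈ F by rwa [h])
  refine le_antisymm ?_ fun g hg => ?_
  · refine (subToricIdeal_isPrime P).radical_le_iff.2 (Ideal.span_le.2 fun g hg => ?_)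
    rw [SetLike.mem_coe, subToricIdeal_eq_comap, Ideal.mem_comap, ← hFrad]
    exact Ideal.le_radical (Ideal.subset_span hg)
  · rw [subToricIdeal_eq_comap, Ideal.mem_comap, ← hFrad] at hg
    obtain ⟨k, hk⟩ := hg
    exact ⟨k, by simpa [killCompl_rename_app] using hkill (Ideal.mem_map_of_mem _ hk)⟩

/-- Let `Γ` be a 4-cycle of `G` and `H` the induced subgraph of `G` on
the vertex set of `Γ`.  If `F ⊆ I_G` is a set of `G`-homogeneous polynomials generating
`I_G` up to radical, then `F ∩ K[x_l : e_l ∈ E(H)]` generates `I_H` up to radical in the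
polynomial ring `K[x_l : e_l ∈ E(H)]`. -/
theorem subToricIdeal_radical_generation {K : Type*} [Field K] [IsAlgClosed K]
    {n m : ℕ} (e : Fin m → Sym2 (Fin n))
    (he : Function.Injective e) (hl : ∀ i, ¬ (e i).IsDiag)
    (hconn : (SimpleGraph.fromEdgeSet (Set.range e)).Connected)
    (v₁ v₂ v₃ v₄ : Fin n) (hv : v₁ ≠ v₂ ∧ v₁ ≠ v₃ ∧ v₁ ≠ v₄ ∧ v₂ ≠ v₃ ∧ v₂ ≠ v₄ ∧ v₃ ≠ v₄)
    (i p j q : Fin m)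
    (hΓ : e i = s(v₁, v₂) ∧ e p = s(v₂, v₃) ∧ e j = s(v₃, v₄) ∧ e q = s(v₄, v₁))
    (W : Set (Fin n)) (hW : W = {v₁, v₂, v₃, v₄})
    (P : Fin m → Prop) (hP : ∀ l, P l ↔ ∀ v ∈ e l, v ∈ W)
    (F : Set (MvPolynomial (Fin m) K))
    (hFmem : ∀ f ∈ F, f ∈ toricIdeal K e)
    (hFhom : ∀ f ∈ F, IsGHomogeneous e f)
    (hFrad : (Ideal.span F).radical = toricIdeal K e) :
    (Ideal.span {g : MvPolynomial {l : Fin m // P l} K |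
        rename (Subtype.val : {l : Fin m // P l} → Fin m) g ∈ F}).radical =
      subToricIdeal K e P :=
  subToricIdeal_radical_generation_general e W P hP F hFhom hFrad
end
end

section
/- Let G be a finite connected bipartite graph and let T_G = {M_1,...,M_r} be the set of indispensable monomials of I_G. Then C_min = {supp(M_1),...,supp(M_r)}; that is, a subset E of {1,...,m} is a minimal element of the collection of supports of positive/negative parts of circuits if and only if E is the support of an indispensable monomial. -/
open MvPolynomial

noncomputable section

/-- A binomial is a difference of two monomials. -/
def IsBinomial {K : Type*} [CommRing K] {σ : Type*} (p : MvPolynomial σ K) : Prop :=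
  ∃ u v : σ →₀ ℕ, p = monomial u 1 - monomial v 1

/-- A nonzero integer vector `u` in the kernel of the incidence matrix `M_G` is a circuit
if its support is minimal among supports of nonzero kernel elements and its coordinates
are relatively prime. -/
def IsCircuit {n m : ℕ} (e : Fin m → Sym2 (Fin n)) (u : Fin m → ℤ) : Prop :=
  u ≠ 0 ∧ (∀ j : Fin n, ∑ i, (incid e i j : ℤ) * u i = 0) ∧
  (∀ v : Fin m → ℤ, v ≠ 0 → (∀ j : Fin n, ∑ i, (incid e i j : ℤ) * v i = 0) →
      {i | v i ≠ 0} ⊆ {i | u i ≠ 0} → {i | v i ≠ 0} = {i | u i ≠ 0}) ∧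
  Finset.univ.gcd u = 1

/-- The collection `C` of subsets of `{1,…,m}` that occur as the support of the positive
or the negative part of a circuit. -/
def circuitSupports {n m : ℕ} (e : Fin m → Sym2 (Fin n)) : Set (Set (Fin m)) :=
  {E | ∃ u : Fin m → ℤ, IsCircuit e u ∧ (E = {i | 0 < u i} ∨ E = {i | u i < 0})}

/-- `C_min`: the minimal elements, with respect to inclusion, of `circuitSupports e`. -/
def Cmin {n m : ℕ} (e : Fin m → Sym2 (Fin n)) : Set (Set (Fin m)) :=
  {E ∈ circuitSupports e | ∀ E' ∈ circuitSupports e, E' ⊆ E → E' = E}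

/-- The monomial `x^u` is indispensable for the ideal `I`: every system of binomial
generators of `I` contains a binomial one of whose monomials is `x^u`. -/
def IndispensableMonomial {K : Type*} [CommRing K] {m : ℕ}
    (I : Ideal (MvPolynomial (Fin m) K)) (u : Fin m →₀ ℕ) : Prop :=
  ∀ S : Set (MvPolynomial (Fin m) K), (∀ p ∈ S, IsBinomial p) → Ideal.span S = I →
    ∃ p ∈ S, ∃ v : Fin m →₀ ℕ,
      p = monomial u 1 - monomial v 1 ∨ p = monomial v 1 - monomial u 1

/-- The edge family `e` is bipartite: the vertices split into a set `A` and its complement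
such that every edge joins a vertex of `A` with a vertex outside `A`. -/
def IsBipartite {n m : ℕ} (e : Fin m → Sym2 (Fin n)) : Prop :=
  ∃ A : Set (Fin n), ∀ i : Fin m, ∀ v w : Fin n, e i = s(v, w) →
    ((v ∈ A ∧ w ∉ A) ∨ (v ∉ A ∧ w ∈ A))


/-!
Write `multideg u = M_G u` for the exponent of `φ(x^u)`. Since `I_G` is spanned by the binomials
`x^a - x^b` with `multideg a = multideg b`, the monomial `x^u` is indispensable exactly when `u` is
minimal, coordinatewise, among the exponents that share their multidegree with another exponent.

On the circuit side, let `v ≠ 0` lie in the kernel of `M_G`. At every vertex the values of `v` on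
the incident edges sum to zero, so one can walk along edges on which `v` is alternately positive
and negative; stopping at the first repeated vertex gives a cycle, which is even and alternating
because `G` is bipartite. Its `±1` signed indicator is a circuit whose positive part lies inside
that of `v`. Hence an exponent `u` has a partner iff its support contains the positive support of
a circuit, and the minimal such `u` are exactly the indicators of the members of `C_min`.
-/

open Matrix

variable {n m : ℕ}

section Multidegree

variable (e : Fin m → Sym2 (Fin n))

/-- The exponent of `φ(x^u)`, that is, the vector `M_G u`. -/
def multideg (u : Fin m →₀ ℕ) : Fin n →₀ ℕ :=
  Finsupp.equivFunOnFinite.symm fun j => ∑ i, incid e i j * u i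

def incMatrix : Matrix (Fin n) (Fin m) ℤ := Matrix.of fun j i => (incid e i j : ℤ)

/-- `x^u` is one of the two monomials of a nonzero binomial of `I_G`. -/
def HasPartner (u : Fin m →₀ ℕ) : Prop := ∃ b ≠ u, multideg e b = multideg e u

variable {e}

lemma multideg_apply (u : Fin m →₀ ℕ) (j : Fin n) :
    multideg e u j = ∑ i, incid e i j * u i := rfl

lemma multideg_add (a b : Fin m →₀ ℕ) : multideg e (a + b) = multideg e a + multideg e b := by
  ext j
  simp only [multideg_apply, Finsupp.add_apply, mul_add, Finset.sum_add_distrib]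

lemma incMatrix_mulVec_eq_zero_iff {v : Fin m → ℤ} :
    incMatrix e *ᵥ v = 0 ↔ ∀ j, ∑ i, (incid e i j : ℤ) * v i = 0 :=
  funext_iff

lemma multideg_eq_iff {a b : Fin m →₀ ℕ} :
    multideg e a = multideg e b ↔ incMatrix e *ᵥ (fun i => (a i : ℤ) - b i) = 0 := by
  simp only [incMatrix_mulVec_eq_zero_iff, Finsupp.ext_iff, multideg_apply, mul_sub,
    Finset.sum_sub_distrib, sub_eq_zero]
  exact_mod_cast Iff.rfl

lemma exists_incid_eq_one (i : Fin m) : ∃ j, incid e i j = 1 :=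
  ⟨(e i).out.1, by simp [incid, Sym2.out_fst_mem]⟩

lemma eq_of_le_of_multideg_eq {a u : Fin m →₀ ℕ} (hle : a ≤ u)
    (h : multideg e a = multideg e u) : a = u := by
  have hdiff : multideg e (u - a) = 0 := by
    rw [← add_right_cancel_iff (a := multideg e a), ← multideg_add, tsub_add_cancel_of_le hle, h,
      zero_add]
  refine le_antisymm hle fun i => ?_
  obtain ⟨j, hj⟩ := exists_incid_eq_one (e := e) i
  have hi : (u - a) i ≤ multideg e (u - a) j :=
    calc (u - a) i = incid e i j * (u - a) i := by rw [hj, one_mul]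
      _ ≤ multideg e (u - a) j :=
        Finset.single_le_sum (f := fun i' => incid e i' j * (u - a) i')
          (fun _ _ => Nat.zero_le _) (Finset.mem_univ i)
  rw [hdiff] at hi
  simpa [tsub_eq_zero_iff_le] using hi

lemma multideg_tsub_add {a b u : Fin m →₀ ℕ} (hle : a ≤ u) (h : multideg e b = multideg e a) :
    multideg e (u - a + b) = multideg e u := by
  rw [multideg_add, h, ← multideg_add, tsub_add_cancel_of_le hle]

lemma HasPartner.mono {a u : Fin m →₀ ℕ} (ha : HasPartner e a) (hle : a ≤ u) :
    HasPartner e u := by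
  obtain ⟨b, hba, hb⟩ := ha
  refine ⟨u - a + b, fun h => hba ?_, multideg_tsub_add hle hb⟩
  exact add_left_cancel (h.trans (tsub_add_cancel_of_le hle).symm)

end Multidegree

section ToricIdeal

variable {e : Fin m → Sym2 (Fin n)} {K : Type*} [CommRing K]

lemma toricMap_monomial (u : Fin m →₀ ℕ) :
    toricMap K e (monomial u 1) = monomial (multideg e u) 1 := by
  rw [toricMap, aeval_monomial, map_one, one_mul, Finsupp.prod_fintype _ _ fun _ => pow_zero _,
    monomial_eq, map_one, one_mul, Finsupp.prod_fintype _ _ fun _ => pow_zero _]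
  simp only [multideg_apply, ← Finset.prod_pow, ← pow_mul, ← Finset.prod_pow_eq_pow_sum]
  exact Finset.prod_comm

lemma monomial_sub_monomial_mem_toricIdeal {a b : Fin m →₀ ℕ}
    (h : multideg e a = multideg e b) :
    (monomial a 1 - monomial b 1 : MvPolynomial (Fin m) K) ∈ toricIdeal K e := by
  rw [toricIdeal, RingHom.mem_ker, map_sub, toricMap_monomial, toricMap_monomial, h, sub_self]

lemma monomial_sub_monomial_mem_toricIdeal_iff [Nontrivial K] {a b : Fin m →₀ ℕ} :
    (monomial a 1 - monomial b 1 : MvPolynomial (Fin m) K) ∈ toricIdeal K e ↔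
      multideg e a = multideg e b := by
  rw [toricIdeal, RingHom.mem_ker, map_sub, toricMap_monomial, toricMap_monomial, sub_eq_zero,
    monomial_left_inj one_ne_zero]

/-- The coefficients of each multidegree must cancel under `φ`. -/
lemma exists_ne_multideg_eq_of_mem_support {f : MvPolynomial (Fin m) K}
    (hf : f ∈ toricIdeal K e) {a : Fin m →₀ ℕ} (ha : a ∈ f.support) :
    ∃ b ∈ f.support, b ≠ a ∧ multideg e b = multideg e a := by
  by_contra! h
  have hφ : toricMap K e f = ∑ w ∈ f.support, monomial (multideg e w) (coeff w f) := by
    conv_lhs => rw [f.as_sum]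
    simp only [map_sum]
    refine Finset.sum_congr rfl fun w _ => ?_
    rw [← mul_one (coeff w f), ← smul_eq_mul, ← smul_monomial, map_smul, toricMap_monomial,
      smul_monomial, smul_eq_mul, mul_one]
  have := congrArg (coeff (multideg e a)) hφ
  rw [show toricMap K e f = 0 from hf, coeff_zero, coeff_sum,
    Finset.sum_eq_single_of_mem a ha fun b hb hba => by rw [coeff_monomial, if_neg (h b hb hba)],
    coeff_monomial, if_pos rfl] at this
  exact mem_support_iff.mp ha this.symm

lemma toricIdeal_le_span {S : Set (MvPolynomial (Fin m) K)}
    (hS : ∀ a b, multideg e a = multideg e b → monomial a 1 - monomial b 1 ∈ Ideal.span S) :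
    toricIdeal K e ≤ Ideal.span S := by
  classical
  intro f hf
  induction hN : f.support.card using Nat.strong_induction_on generalizing f with
  | _ N ih =>
  obtain rfl | ⟨a, ha⟩ := f.support.eq_empty_or_nonempty.imp_left support_eq_empty.mp
  · exact zero_mem _
  obtain ⟨b, hb, hba, hdeg⟩ := exists_ne_multideg_eq_of_mem_support hf ha
  set q : MvPolynomial (Fin m) K := monomial a (coeff a f) - monomial b (coeff a f)
  have hq : q = C (coeff a f) * (monomial a 1 - monomial b 1) := by
    simp only [q, mul_sub, C_mul_monomial, mul_one]
  have hfq : f - q ∈ toricIdeal K e := by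
    rw [hq]
    exact sub_mem hf (Ideal.mul_mem_left _ _ (monomial_sub_monomial_mem_toricIdeal hdeg.symm))
  have hsupp : (f - q).support ⊂ f.support := by
    refine Finset.ssubset_iff_of_subset (fun w hw => ?_) |>.mpr ⟨a, ha, ?_⟩
    · rcases Finset.mem_union.mp (support_sub _ _ _ hw) with hw | hw
      · exact hw
      · rcases Finset.mem_union.mp (support_sub _ _ _ hw) with hw | hw <;>
          rw [Finset.mem_singleton.mp (support_monomial_subset hw)] <;> assumption
    · simp [q, coeff_monomial, hba]
  have hspan := ih _ (hN ▸ Finset.card_lt_card hsupp) hfq rfl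
  rw [← sub_add_cancel f q]
  exact add_mem hspan (hq ▸ Ideal.mul_mem_left _ _ (hS a b hdeg.symm))

end ToricIdeal

section Indispensable

variable {K : Type*} [CommRing K]

lemma exists_coeff_mul_ne_zero_of_mem_span {σ : Type*} {S : Set (MvPolynomial σ K)}
    {f : MvPolynomial σ K} (hf : f ∈ Ideal.span S) {u : σ →₀ ℕ} (hu : coeff u f ≠ 0) :
    ∃ p ∈ S, ∃ g, coeff u (g * p) ≠ 0 := by
  by_contra! h
  suffices ∀ g, coeff u (g * f) = 0 from hu (by simpa using this 1)
  clear hu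
  induction hf using Submodule.span_induction with
  | mem p hp => exact h p hp
  | zero => simp
  | add x y _ _ hx hy => simp [mul_add, hx, hy]
  | smul r x _ hx => intro g; simpa [mul_assoc] using hx (g * r)

lemma le_or_le_of_coeff_mul_binomial_ne_zero {σ : Type*} {u α β : σ →₀ ℕ}
    {g : MvPolynomial σ K} (h : coeff u (g * (monomial α 1 - monomial β 1)) ≠ 0) :
    α ≤ u ∨ β ≤ u := by
  rw [mul_sub, coeff_sub, coeff_mul_monomial', coeff_mul_monomial'] at h
  by_contra! hne
  simp [hne.1, hne.2] at h

variable {e : Fin m → Sym2 (Fin n)}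

theorem indispensableMonomial_of_minimal [Nontrivial K] {u : Fin m →₀ ℕ}
    (hu : Minimal (HasPartner e) u) : IndispensableMonomial (toricIdeal K e) u := by
  intro S hSbin hSspan
  obtain ⟨b, hbu, hdeg⟩ := hu.prop
  have hmem : (monomial u 1 - monomial b 1 : MvPolynomial (Fin m) K) ∈ Ideal.span S :=
    hSspan ▸ monomial_sub_monomial_mem_toricIdeal hdeg.symm
  obtain ⟨p, hpS, g, hg⟩ := exists_coeff_mul_ne_zero_of_mem_span hmem (u := u)
    (by simp [coeff_monomial, hbu])
  obtain ⟨α, β, rfl⟩ := hSbin p hpS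
  have hαβ : α ≠ β := by rintro rfl; simp at hg
  have hdeg' : multideg e α = multideg e β :=
    monomial_sub_monomial_mem_toricIdeal_iff.mp (hSspan ▸ Ideal.subset_span hpS)
  rcases le_or_le_of_coeff_mul_binomial_ne_zero hg with hα | hβ
  · obtain rfl := hu.eq_of_le ⟨β, hαβ.symm, hdeg'.symm⟩ hα
    exact ⟨_, hpS, β, Or.inl rfl⟩
  · obtain rfl := hu.eq_of_le ⟨α, hαβ, hdeg'⟩ hβ
    exact ⟨_, hpS, α, Or.inr rfl⟩

variable (K e) in
def binomialsAvoiding (u : Fin m →₀ ℕ) : Set (MvPolynomial (Fin m) K) :=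
  {p | ∃ a b, a ≠ b ∧ a ≠ u ∧ b ≠ u ∧ multideg e a = multideg e b ∧
    p = monomial a 1 - monomial b 1}

lemma monomial_sub_mem_span_binomialsAvoiding {u : Fin m →₀ ℕ}
    (hu : ¬ Minimal (HasPartner e) u) {b : Fin m →₀ ℕ} (hb : multideg e b = multideg e u) :
    monomial u 1 - monomial b 1 ∈ Ideal.span (binomialsAvoiding K e u) := by
  by_cases hbu : b = u
  · simp [hbu]
  rw [minimal_iff_forall_lt, not_and_or] at hu
  rcases hu with hu | hu
  · exact absurd ⟨b, hbu, hb⟩ hu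
  push Not at hu
  obtain ⟨a, hau, b₀, hb₀a, hb₀⟩ := hu
  have hb₀u : b₀ ≠ u := by
    rintro rfl
    exact hau.ne (eq_of_le_of_multideg_eq hau.le hb₀.symm)
  have hcancel : u - a + a = u := tsub_add_cancel_of_le hau.le
  have hsplit : (monomial u 1 - monomial b 1 : MvPolynomial (Fin m) K) =
      monomial (u - a) 1 * (monomial a 1 - monomial b₀ 1) +
        (monomial (u - a + b₀) 1 - monomial b 1) := by
    rw [mul_sub, monomial_mul, monomial_mul, hcancel, mul_one]
    ring
  rw [hsplit]
  refine add_mem (Ideal.mul_mem_left _ _ (Ideal.subset_span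
    ⟨a, b₀, hb₀a.symm, hau.ne, hb₀u, hb₀.symm, rfl⟩)) ?_
  by_cases hu' : u - a + b₀ = b
  · simp [hu']
  refine Ideal.subset_span ⟨_, b, hu', fun h => hb₀a ?_, hbu, ?_, rfl⟩
  · exact add_left_cancel (h.trans hcancel.symm)
  · rw [multideg_tsub_add hau.le hb₀, hb]

lemma span_binomialsAvoiding {u : Fin m →₀ ℕ} (hu : ¬ Minimal (HasPartner e) u) :
    Ideal.span (binomialsAvoiding K e u) = toricIdeal K e := by
  refine le_antisymm (Ideal.span_le.mpr ?_) (toricIdeal_le_span fun a b hab => ?_)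
  · rintro _ ⟨a, b, -, -, -, hab, rfl⟩
    exact monomial_sub_monomial_mem_toricIdeal hab
  by_cases ha : a = u
  · subst ha
    exact monomial_sub_mem_span_binomialsAvoiding hu hab.symm
  by_cases hb : b = u
  · subst hb
    simpa using neg_mem (monomial_sub_mem_span_binomialsAvoiding (K := K) hu hab)
  by_cases hab' : a = b
  · simp [hab']
  exact Ideal.subset_span ⟨a, b, hab', ha, hb, hab, rfl⟩

theorem minimal_of_indispensableMonomial [Nontrivial K] {u : Fin m →₀ ℕ}
    (hu : IndispensableMonomial (toricIdeal K e) u) : Minimal (HasPartner e) u := by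
  by_contra hmin
  obtain ⟨_, ⟨a, b, hab, hau, hbu, -, rfl⟩, v, hv⟩ :=
    hu _ (by rintro _ ⟨a, b, -, -, -, -, rfl⟩; exact ⟨a, b, rfl⟩) (span_binomialsAvoiding hmin)
  rcases eq_or_ne v u with rfl | hvu
  · rw [sub_self, or_self, sub_eq_zero, monomial_left_inj one_ne_zero] at hv
    exact hab hv
  · rcases hv with h | h <;> simpa [coeff_monomial, hau, hbu, hvu] using congrArg (coeff u) h

theorem indispensableMonomial_toricIdeal_iff [Nontrivial K] {u : Fin m →₀ ℕ} :
    IndispensableMonomial (toricIdeal K e) u ↔ Minimal (HasPartner e) u :=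
  ⟨minimal_of_indispensableMonomial, indispensableMonomial_of_minimal⟩

end Indispensable

lemma Int.sign_eq_neg_of_pos_iff_not_pos {p q : ℤ} (hp : p ≠ 0) (hq : q ≠ 0)
    (h : 0 < q ↔ ¬ 0 < p) : q.sign = -p.sign := by
  rcases hp.lt_or_gt with hp | hp <;> rcases hq.lt_or_gt with hq | hq
  · exact absurd (h.mpr hp.not_gt) hq.not_gt
  · rw [Int.sign_eq_one_of_pos hq, Int.sign_eq_neg_one_of_neg hp, neg_neg]
  · rw [Int.sign_eq_neg_one_of_neg hq, Int.sign_eq_one_of_pos hp]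
  · exact absurd hp (h.mp hq)

lemma ZMod.forall_of_add_one {k : ℕ} [NeZero k] {P : ZMod k → Prop}
    (hP : ∀ a, P a → P (a + 1)) {a₀ : ZMod k} (h₀ : P a₀) (a : ZMod k) : P a := by
  have key (t : ℕ) : P (a₀ + t) := by
    induction t with
    | zero => simpa using h₀
    | succ t ih => simpa [add_assoc] using hP _ ih
  simpa using key (a - a₀).val

lemma Finset.gcd_eq_one_of_isUnit {ι α : Type*} [CommMonoidWithZero α] [NormalizedGCDMonoid α]
    {s : Finset ι} {f : ι → α} {i : ι} (hi : i ∈ s) (h : IsUnit (f i)) : s.gcd f = 1 := by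
  rw [← Finset.normalize_gcd, normalize_eq_one]
  exact isUnit_of_dvd_unit (Finset.gcd_dvd hi) h

/-- The first repetition `f (I + k + 1) = f I` closes a cycle, indexed by `ZMod (k + 1)`, on
which `f` is injective. -/
theorem exists_injective_zmod_of_finite {α : Type*} [Finite α] (f : ℕ → α) :
    ∃ k I : ℕ, Function.Injective (fun a : ZMod (k + 1) => f (I + a.val)) ∧
      ∀ a : ZMod (k + 1), f (I + a.val + 1) = f (I + (a + 1).val) := by
  classical
  have hex : ∃ K, ∃ I < K, f I = f K := by
    obtain ⟨p, q, hpq, h⟩ := Finite.exists_ne_map_eq_of_infinite f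
    rcases hpq.lt_or_gt with h' | h'
    · exact ⟨q, p, h', h⟩
    · exact ⟨p, q, h', h.symm⟩
  obtain ⟨I, hIK, hfI⟩ := Nat.find_spec hex
  have hinj : ∀ p < Nat.find hex, ∀ q < Nat.find hex, f p = f q → p = q := by
    intro p hp q hq h
    by_contra hne
    rcases lt_or_gt_of_ne hne with h' | h'
    · exact Nat.find_min hex hq ⟨p, h', h⟩
    · exact Nat.find_min hex hp ⟨q, h', h.symm⟩
  obtain ⟨k, hk⟩ : ∃ k, Nat.find hex = I + (k + 1) := ⟨Nat.find hex - I - 1, by omega⟩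
  refine ⟨k, I, fun a b h => ZMod.val_injective _ ?_, fun a => ?_⟩
  · have := hinj _ (by have := a.val_lt; omega) _ (by have := b.val_lt; omega) h
    omega
  · rw [ZMod.val_add, ZMod.val_one_eq_one_mod, Nat.add_mod_mod]
    rcases Nat.lt_or_ge (a.val + 1) (k + 1) with h | h
    · rw [Nat.mod_eq_of_lt h, add_assoc]
    · have ha : a.val + 1 = k + 1 := le_antisymm a.val_lt h
      rw [ha, Nat.mod_self, add_zero, add_assoc, ha, ← hk, hfI]

section Cycles

variable {e : Fin m → Sym2 (Fin n)}

lemma incid_eq_of_edge_eq {i : Fin m} {x y : Fin n} (h : e i = s(x, y)) (hxy : x ≠ y)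
    (j : Fin n) : (incid e i j : ℤ) = (if j = x then 1 else 0) + (if j = y then 1 else 0) := by
  by_cases hx : j = x <;> by_cases hy : j = y <;> simp_all [incid]

lemma exists_mul_neg_of_mulVec_eq_zero {v : Fin m → ℤ} (hv : incMatrix e *ᵥ v = 0) {i : Fin m}
    {y : Fin n} (hy : y ∈ e i) (hvi : v i ≠ 0) : ∃ i', y ∈ e i' ∧ v i * v i' < 0 := by
  by_contra! h
  have hpos : 0 < ∑ i', (incid e i' y : ℤ) * (v i * v i') := by
    refine Finset.sum_pos' (fun i' _ => ?_) ⟨i, Finset.mem_univ _, ?_⟩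
    · by_cases hy' : y ∈ e i' <;> simp [incid, hy', h i']
    · simpa [incid, hy] using mul_self_pos.mpr hvi
  have hzero : ∑ i', (incid e i' y : ℤ) * (v i * v i') = v i * (incMatrix e *ᵥ v) y := by
    simp only [mulVec, dotProduct, incMatrix, of_apply, Finset.mul_sum]
    exact Finset.sum_congr rfl fun _ _ => by ring
  rw [hv, Pi.zero_apply, mul_zero] at hzero
  exact hpos.ne' hzero

variable (e) in
def IsBipartition (A : Set (Fin n)) : Prop :=
  ∀ i : Fin m, ∀ v w : Fin n, e i = s(v, w) → ((v ∈ A ∧ w ∉ A) ∨ (v ∉ A ∧ w ∈ A))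

lemma IsBipartition.mem_iff_notMem {A : Set (Fin n)} (hA : IsBipartition e A) {i : Fin m}
    {x y : Fin n} (h : e i = s(x, y)) : y ∈ A ↔ x ∉ A := by
  rcases hA i x y h with h | h <;> tauto

/-- The invariant `0 < v (c l) ↔ x l ∈ A` ties the signs to the sides of the bipartition, so
every closed stretch of the walk alternates in sign all the way round. -/
lemma exists_alternating_walk {A : Set (Fin n)} (hA : IsBipartition e A) {v : Fin m → ℤ}
    (hv0 : v ≠ 0) (hv : incMatrix e *ᵥ v = 0) :
    ∃ (x : ℕ → Fin n) (c : ℕ → Fin m),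
      ∀ l, e (c l) = s(x l, x (l + 1)) ∧ v (c l) ≠ 0 ∧ (0 < v (c l) ↔ x l ∈ A) := by
  let State := {p : Fin n × Fin m // p.1 ∈ e p.2 ∧ v p.2 ≠ 0 ∧ (0 < v p.2 ↔ p.1 ∈ A)}
  have step (p : State) : ∃ q : State, e p.1.2 = s(p.1.1, q.1.1) := by
    obtain ⟨⟨x, i⟩, hx, hvi, hsign⟩ := p
    dsimp only at hx hvi hsign ⊢
    have hxy : e i = s(x, Sym2.Mem.other hx) := (Sym2.other_spec hx).symm
    obtain ⟨i', hy, hneg⟩ := exists_mul_neg_of_mulVec_eq_zero hv (Sym2.other_mem hx) hvi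
    refine ⟨⟨(_, i'), hy, fun h => by simp [h] at hneg, ?_⟩, hxy⟩
    show 0 < v i' ↔ Sym2.Mem.other hx ∈ A
    rw [hA.mem_iff_notMem hxy, ← hsign]
    exact ⟨fun h1 h2 => by nlinarith, fun h1 => by push Not at h1; nlinarith⟩
  obtain ⟨i₀, hi₀⟩ := Function.ne_iff.mp hv0
  have hx₀ := Sym2.out_fst_mem (e i₀)
  have start : Nonempty State := by
    by_cases hsign : 0 < v i₀ ↔ (e i₀).out.1 ∈ A
    · exact ⟨⟨(_, i₀), hx₀, hi₀, hsign⟩⟩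
    · refine ⟨⟨(Sym2.Mem.other hx₀, i₀), Sym2.other_mem hx₀, hi₀, ?_⟩⟩
      rw [hA.mem_iff_notMem (Sym2.other_spec hx₀).symm]
      tauto
  choose f hf using step
  obtain ⟨p₀⟩ := start
  refine ⟨fun l => (f^[l] p₀).1.1, fun l => (f^[l] p₀).1.2, fun l => ⟨?_, (f^[l] p₀).2.2⟩⟩
  simp only [Function.iterate_succ_apply']
  exact hf _

variable (e) in
structure IsAltCycle {k : ℕ} (v : Fin m → ℤ) (X : ZMod k → Fin n) (c : ZMod k → Fin m) :
    Prop where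
  injective : Function.Injective X
  edge_eq : ∀ a, e (c a) = s(X a, X (a + 1))
  ne_zero : ∀ a, v (c a) ≠ 0
  sign_add_one : ∀ a, (v (c (a + 1))).sign = -(v (c a)).sign

theorem exists_isAltCycle {A : Set (Fin n)} (hA : IsBipartition e A) {v : Fin m → ℤ}
    (hv0 : v ≠ 0) (hv : incMatrix e *ᵥ v = 0) :
    ∃ k, ∃ X : ZMod (k + 1) → Fin n, ∃ c, IsAltCycle e v X c := by
  obtain ⟨x, c, hw⟩ := exists_alternating_walk hA hv0 hv
  obtain ⟨k, I, hinj, hclose⟩ := exists_injective_zmod_of_finite x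
  have hedge (a : ZMod (k + 1)) :
      e (c (I + a.val)) = s(x (I + a.val), x (I + (a + 1).val)) := by
    rw [← hclose]
    exact (hw _).1
  refine ⟨k, _, _, ⟨hinj, hedge, fun a => (hw _).2.1, fun a => ?_⟩⟩
  refine Int.sign_eq_neg_of_pos_iff_not_pos (hw _).2.1 (hw _).2.1 ?_
  rw [(hw _).2.2, (hw _).2.2, hA.mem_iff_notMem (hedge a)]

namespace IsAltCycle

variable {k : ℕ} {v : Fin m → ℤ} {X : ZMod k → Fin n} {c : ZMod k → Fin m}

lemma edge_add_one_ne (h : IsAltCycle e v X c) (a : ZMod k) : c (a + 1) ≠ c a := by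
  intro hc
  have := h.sign_add_one a
  rw [hc] at this
  exact h.ne_zero a (Int.sign_eq_zero_iff_zero.mp (by omega))

lemma vert_ne_add_one (h : IsAltCycle e v X c) (a : ZMod k) : X a ≠ X (a + 1) := fun hX =>
  h.edge_add_one_ne a (by rw [← h.injective hX])

lemma edge_injective (h : IsAltCycle e v X c) : Function.Injective c := by
  intro a b hab
  have hs := h.edge_eq a
  rw [hab, h.edge_eq b, Sym2.eq_iff] at hs
  rcases hs with ⟨hs, -⟩ | ⟨hs, -⟩
  · exact (h.injective hs).symm
  · rw [h.injective hs] at hab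
    exact absurd hab.symm (h.edge_add_one_ne a)

variable [NeZero k]

lemma mulVec_apply (h : IsAltCycle e v X c) {v' : Fin m → ℤ}
    (hv' : ∀ j ∉ Set.range c, v' j = 0) (j : Fin n) :
    (incMatrix e *ᵥ v') j =
      ∑ a, ((if j = X a then 1 else 0) + (if j = X (a + 1) then 1 else 0)) * v' (c a) := by
  refine (Fintype.sum_of_injective c h.edge_injective _ (fun i => (incid e i j : ℤ) * v' i)
    (fun i hi => by rw [hv' i hi, mul_zero]) fun a => ?_).symm
  rw [incid_eq_of_edge_eq (h.edge_eq a) (h.vert_ne_add_one a)]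

lemma mulVec_apply_vert (h : IsAltCycle e v X c) {v' : Fin m → ℤ}
    (hv' : ∀ j ∉ Set.range c, v' j = 0) (a : ZMod k) :
    (incMatrix e *ᵥ v') (X (a + 1)) = v' (c a) + v' (c (a + 1)) := by
  simp [h.mulVec_apply hv', h.injective.eq_iff, add_mul, Finset.sum_add_distrib, add_comm]

lemma mulVec_apply_of_notMem (h : IsAltCycle e v X c) {v' : Fin m → ℤ}
    (hv' : ∀ j ∉ Set.range c, v' j = 0) {j : Fin n} (hj : j ∉ Set.range X) :
    (incMatrix e *ᵥ v') j = 0 := by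
  simp only [Set.mem_range, not_exists] at hj
  simp [h.mulVec_apply hv', fun a => Ne.symm (hj a)]

lemma ne_zero_of_mulVec_eq_zero (h : IsAltCycle e v X c) {v' : Fin m → ℤ} (hv'0 : v' ≠ 0)
    (hv' : incMatrix e *ᵥ v' = 0) (hoff : ∀ j ∉ Set.range c, v' j = 0) (a : ZMod k) :
    v' (c a) ≠ 0 := by
  obtain ⟨j₀, hj₀⟩ := Function.ne_iff.mp hv'0
  obtain ⟨a₀, rfl⟩ : j₀ ∈ Set.range c := by
    by_contra hc
    exact hj₀ (hoff _ hc)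
  refine ZMod.forall_of_add_one (P := fun b => v' (c b) ≠ 0) (fun b hb => ?_) hj₀ a
  have := h.mulVec_apply_vert hoff b
  rw [hv', Pi.zero_apply] at this
  omega

/-- The witness is the signed indicator of the cycle, `sign (v j)` on its edges. -/
theorem exists_isCircuit (h : IsAltCycle e v X c) :
    ∃ w, IsCircuit e w ∧ ∀ j, w j = 0 ∨ w j = (v j).sign := by
  classical
  set w : Fin m → ℤ := fun j => if j ∈ Set.range c then (v j).sign else 0
  have hw_edge (a : ZMod k) : w (c a) = (v (c a)).sign := if_pos ⟨a, rfl⟩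
  have hw_off (j) (hj : j ∉ Set.range c) : w j = 0 := if_neg hj
  have hw_ne (a : ZMod k) : w (c a) ≠ 0 := by
    rw [hw_edge]
    exact mt Int.sign_eq_zero_iff_zero.mp (h.ne_zero a)
  have hker : incMatrix e *ᵥ w = 0 := by
    ext j
    by_cases hj : j ∈ Set.range X
    · obtain ⟨b, rfl⟩ := hj
      rw [← sub_add_cancel b 1, h.mulVec_apply_vert hw_off, hw_edge, hw_edge, h.sign_add_one,
        add_neg_cancel, Pi.zero_apply]
    · exact h.mulVec_apply_of_notMem hw_off hj
  have hunit : IsUnit (w (c 0)) := by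
    rw [hw_edge, Int.isUnit_iff_natAbs_eq]
    exact Int.natAbs_sign_of_ne_zero (h.ne_zero 0)
  refine ⟨w, ⟨fun h0 => hw_ne 0 (congrFun h0 _), incMatrix_mulVec_eq_zero_iff.mp hker,
    fun v' hv'0 hv' hsub => ?_, Finset.gcd_eq_one_of_isUnit (Finset.mem_univ _) hunit⟩,
    fun j => ?_⟩
  · have hoff (j) (hj : j ∉ Set.range c) : v' j = 0 := by
      by_contra hne
      exact hsub hne (hw_off j hj)
    refine hsub.antisymm fun j hj => ?_
    obtain ⟨a, rfl⟩ : j ∈ Set.range c := by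
      by_contra hc
      exact hj (hw_off _ hc)
    exact h.ne_zero_of_mulVec_eq_zero hv'0 (incMatrix_mulVec_eq_zero_iff.mpr hv') hoff a
  · by_cases hj : j ∈ Set.range c
    · exact Or.inr (if_pos hj)
    · exact Or.inl (if_neg hj)

end IsAltCycle

theorem exists_circuit_pos_subset (hbip : IsBipartite e) {v : Fin m → ℤ} (hv0 : v ≠ 0)
    (hv : incMatrix e *ᵥ v = 0) :
    ∃ w, IsCircuit e w ∧ (∀ j, w j = 0 ∨ w j = 1 ∨ w j = -1) ∧
      {j | 0 < w j} ⊆ {j | 0 < v j} := by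
  obtain ⟨A, hA⟩ := hbip
  obtain ⟨k, X, c, h⟩ := exists_isAltCycle hA hv0 hv
  obtain ⟨w, hw, hwv⟩ := h.exists_isCircuit
  refine ⟨w, hw, fun j => ?_, fun j hj => ?_⟩ <;> rcases hwv j with h0 | hs
  · exact Or.inl h0
  · rw [hs]
    rcases Int.sign_trichotomy (v j) with h | h | h <;> simp [h]
  · exact absurd hj (by simp [h0])
  · exact Int.sign_pos_iff.mp (hs ▸ hj)

end Cycles

section Supports

def indicatorVec (E : Set (Fin m)) : Fin m →₀ ℕ :=
  Finsupp.equivFunOnFinite.symm (E.indicator 1)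

lemma indicatorVec_apply (E : Set (Fin m)) (i : Fin m) : indicatorVec E i = E.indicator 1 i :=
  rfl

lemma support_indicatorVec (E : Set (Fin m)) : {i | indicatorVec E i ≠ 0} = E := by
  ext i
  simp [indicatorVec, Set.indicator]

lemma indicatorVec_le_iff {E : Set (Fin m)} {a : Fin m →₀ ℕ} :
    indicatorVec E ≤ a ↔ E ⊆ {i | a i ≠ 0} := by
  refine ⟨fun h i hi => ?_, fun h i => ?_⟩
  · have := h i
    rw [indicatorVec_apply, Set.indicator_of_mem hi, Pi.one_apply] at this
    exact Nat.one_le_iff_ne_zero.mp this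
  · by_cases hi : i ∈ E
    · have := h hi
      simp_all [indicatorVec, Nat.one_le_iff_ne_zero]
    · simp [indicatorVec, hi]

lemma indicatorVec_le_indicatorVec_iff {E E' : Set (Fin m)} :
    indicatorVec E' ≤ indicatorVec E ↔ E' ⊆ E := by
  rw [indicatorVec_le_iff, support_indicatorVec]

variable {e : Fin m → Sym2 (Fin n)}

lemma exists_of_mem_circuitSupports {E : Set (Fin m)} (hE : E ∈ circuitSupports e) :
    ∃ v, v ≠ 0 ∧ incMatrix e *ᵥ v = 0 ∧ E = {j | 0 < v j} := by
  obtain ⟨u, ⟨hu0, hu, -⟩, rfl | rfl⟩ := hE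
  · exact ⟨u, hu0, incMatrix_mulVec_eq_zero_iff.mpr hu, rfl⟩
  · refine ⟨-u, neg_ne_zero.mpr hu0, ?_, by simp⟩
    rw [mulVec_neg, incMatrix_mulVec_eq_zero_iff.mpr hu, neg_zero]

lemma hasPartner_indicatorVec_pos {w : Fin m → ℤ} (hw0 : w ≠ 0) (hw : incMatrix e *ᵥ w = 0)
    (hw1 : ∀ j, w j = 0 ∨ w j = 1 ∨ w j = -1) : HasPartner e (indicatorVec {j | 0 < w j}) := by
  have hdiff :
      (fun j => (indicatorVec {j | 0 < w j} j : ℤ) - indicatorVec {j | w j < 0} j) = w := by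
    funext j
    rcases hw1 j with h | h | h <;> simp [indicatorVec, Set.indicator, h]
  refine ⟨indicatorVec {j | w j < 0}, fun h => hw0 ?_,
    (multideg_eq_iff.mpr (hdiff.symm ▸ hw)).symm⟩
  rw [← hdiff, h]
  ext j
  simp

theorem hasPartner_iff_exists_mem_circuitSupports (hbip : IsBipartite e) {a : Fin m →₀ ℕ} :
    HasPartner e a ↔ ∃ E ∈ circuitSupports e, E ⊆ {i | a i ≠ 0} := by
  constructor
  · rintro ⟨b, hba, hdeg⟩
    have hv0 : (fun i => (a i : ℤ) - b i) ≠ 0 := fun h => hba <| by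
      ext i
      have := congrFun h i
      simp only [Pi.zero_apply, sub_eq_zero, Nat.cast_inj] at this
      exact this.symm
    obtain ⟨w, hw, -, hwv⟩ := exists_circuit_pos_subset hbip hv0 (multideg_eq_iff.mp hdeg.symm)
    refine ⟨{j | 0 < w j}, ⟨w, hw, Or.inl rfl⟩, fun j hj => ?_⟩
    have := hwv hj
    simp only [Set.mem_ofPred_eq] at this ⊢
    omega
  · rintro ⟨E, hE, hsub⟩
    obtain ⟨v, hv0, hv, rfl⟩ := exists_of_mem_circuitSupports hE
    obtain ⟨w, hw, hw1, hwv⟩ := exists_circuit_pos_subset hbip hv0 hv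
    exact (hasPartner_indicatorVec_pos hw.1 (incMatrix_mulVec_eq_zero_iff.mpr hw.2.1) hw1).mono
      (indicatorVec_le_iff.mpr (hwv.trans hsub))

theorem mem_Cmin_iff (hbip : IsBipartite e) {E : Set (Fin m)} :
    E ∈ Cmin e ↔ ∃ u, Minimal (HasPartner e) u ∧ E = {i | u i ≠ 0} := by
  have hind (E' : Set (Fin m)) (hE' : E' ∈ circuitSupports e) : HasPartner e (indicatorVec E') :=
    (hasPartner_iff_exists_mem_circuitSupports hbip).mpr ⟨E', hE', (support_indicatorVec E').ge⟩
  constructor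
  · rintro ⟨hE, hmin⟩
    refine ⟨indicatorVec E, ⟨hind E hE, fun a ha hle => ?_⟩, (support_indicatorVec E).symm⟩
    obtain ⟨E', hE', hsub⟩ := (hasPartner_iff_exists_mem_circuitSupports hbip).mp ha
    have hsubE : E' ⊆ E := fun i hi => by
      rw [← support_indicatorVec E]
      have := hle i
      have := hsub hi
      simp only [Set.mem_ofPred_eq] at *
      omega
    exact indicatorVec_le_iff.mpr (hmin E' hE' hsubE ▸ hsub)
  · rintro ⟨u, hu, rfl⟩
    obtain ⟨E, hE, hsub⟩ := (hasPartner_iff_exists_mem_circuitSupports hbip).mp hu.prop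
    have hu_eq : indicatorVec E = u := hu.eq_of_le (hind E hE) (indicatorVec_le_iff.mpr hsub)
    rw [← hu_eq, support_indicatorVec]
    refine ⟨hE, fun E' hE' hsub' => ?_⟩
    have := hu.eq_of_le (hind E' hE') (hu_eq ▸ indicatorVec_le_indicatorVec_iff.mpr hsub')
    rw [← hu_eq] at this
    simpa [support_indicatorVec] using congrArg (fun a => {i | a i ≠ 0}) this

end Supports

theorem Cmin_eq_supports_indispensable_of_bipartite_general {K : Type*} [Field K]
    {n m : ℕ} (e : Fin m → Sym2 (Fin n))
    (hbip : IsBipartite e) :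
    Cmin e = {E : Set (Fin m) | ∃ u : Fin m →₀ ℕ,
      IndispensableMonomial (toricIdeal K e) u ∧ E = {i | u i ≠ 0}} := by
  ext E
  simp only [Set.mem_ofPred_eq, indispensableMonomial_toricIdeal_iff]
  exact mem_Cmin_iff hbip

/-- For a finite connected bipartite graph `G`, the set `C_min` equals
the set of supports of the indispensable monomials of `I_G`. -/
theorem Cmin_eq_supports_indispensable_of_bipartite {K : Type*} [Field K] [IsAlgClosed K]
    {n m : ℕ} (e : Fin m → Sym2 (Fin n))
    (he : Function.Injective e) (hl : ∀ i, ¬ (e i).IsDiag)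
    (hconn : (SimpleGraph.fromEdgeSet (Set.range e)).Connected)
    (hbip : IsBipartite e) :
    Cmin e = {E : Set (Fin m) | ∃ u : Fin m →₀ ℕ,
      IndispensableMonomial (toricIdeal K e) u ∧ E = {i | u i ≠ 0}} :=
  Cmin_eq_supports_indispensable_of_bipartite_general e hbip
end
end

section
/- Let G be a finite connected simple graph and suppose {B_1,...,B_s} is a set of quadratic binomials generating the toric ideal I_G. Then the set S_G of monomials appearing in the binomials B_1,...,B_s is exactly the set of indispensable monomials of I_G; equivalently, S_G is the unique minimal monomial generating set of the ideal N_G generated by all monomials x^u for which there exists a nonzero binomial x^u − x^w ∈ I_G. -/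
open MvPolynomial

noncomputable section

section Aux

variable {K : Type*} [Field K] {n m : ℕ} (e : Fin m → Sym2 (Fin n))

lemma prod_X_pow_univ {σ : Type*} [Fintype σ] [DecidableEq σ] (c : σ → ℕ) :
    (∏ j, (X j : MvPolynomial σ K) ^ c j) = monomial (Finsupp.equivFunOnFinite.symm c) 1 := by
  rw [← prod_X_pow_eq_monomial]
  refine (Finset.prod_subset (Finset.subset_univ _) ?_).symm
  intro j _ hj
  have h0 : (Finsupp.equivFunOnFinite.symm c) j = 0 := by
    simpa [Finsupp.mem_support_iff] using hj
  have hc : c j = 0 := h0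
  simp [hc]

lemma toricMap_monomial_s12 (a : Fin m →₀ ℕ) :
    toricMap K e (monomial a 1) =
      monomial (Finsupp.equivFunOnFinite.symm fun j => ∑ i, a i * incid e i j) 1 := by
  rw [toricMap, aeval_monomial, map_one, one_mul]
  rw [Finsupp.prod_fintype _ _ (fun i => pow_zero _)]
  have : ∀ i : Fin m, (∏ j, (X j : MvPolynomial (Fin n) K) ^ incid e i j) ^ a i
      = ∏ j, X j ^ (a i * incid e i j) := by
    intro i
    rw [← Finset.prod_pow]
    exact Finset.prod_congr rfl fun j _ => by rw [← pow_mul, mul_comm]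
  rw [Finset.prod_congr rfl fun i _ => this i, Finset.prod_comm]
  rw [Finset.prod_congr rfl fun j _ => Finset.prod_pow_eq_pow_sum Finset.univ _ _]
  exact prod_X_pow_univ _

lemma sum_incid (hl : ∀ i, ¬ (e i).IsDiag) (i : Fin m) : ∑ j, incid e i j = 2 := by
  have key : ∀ z : Sym2 (Fin n), ¬ z.IsDiag → ∑ j, (if j ∈ z then 1 else 0) = 2 := by
    intro z
    induction z using Sym2.inductionOn with
    | _ x y =>
      intro hz
      have hxy : x ≠ y := by simpa [Sym2.isDiag_iff_proj_eq] using hz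
      have hfil : Finset.univ.filter (· ∈ s(x, y)) = {x, y} := by
        ext j; simp [Sym2.mem_iff]
      calc ∑ j, (if j ∈ s(x, y) then 1 else 0)
          = ∑ j ∈ Finset.univ.filter (· ∈ s(x, y)), 1 := (Finset.sum_filter _ _).symm
        _ = 2 := by rw [hfil, Finset.sum_const, Finset.card_pair hxy, smul_eq_mul, mul_one]
  exact key (e i) (hl i)

lemma ker_monomial_sub {a c : Fin m →₀ ℕ}
    (h : monomial a (1 : K) - monomial c 1 ∈ toricIdeal K e) (j : Fin n) :
    ∑ i, a i * incid e i j = ∑ i, c i * incid e i j := by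
  rw [toricIdeal, RingHom.mem_ker, map_sub, sub_eq_zero, toricMap_monomial_s12, toricMap_monomial_s12]
    at h
  rcases (monomial_eq_monomial_iff _ _ _ _).mp h with ⟨h1, -⟩ | ⟨h1, -⟩
  · exact congrFun (Finsupp.equivFunOnFinite.symm.injective h1) j
  · exact absurd h1 one_ne_zero

lemma sum_eq_of_mem_ker (hl : ∀ i, ¬ (e i).IsDiag) {a c : Fin m →₀ ℕ}
    (h : monomial a (1 : K) - monomial c 1 ∈ toricIdeal K e) :
    ∑ i, a i = ∑ i, c i := by
  have h2 : ∀ d : Fin m →₀ ℕ, ∑ j, ∑ i, d i * incid e i j = (∑ i, d i) * 2 := by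
    intro d
    rw [Finset.sum_comm, Finset.sum_mul]
    exact Finset.sum_congr rfl fun i _ => by
      rw [← Finset.mul_sum, sum_incid e hl]
  have heq : (∑ i, a i) * 2 = (∑ i, c i) * 2 := by
    rw [← h2 a, ← h2 c]
    exact Finset.sum_congr rfl fun j _ => ker_monomial_sub e h j
  omega

lemma eq_single_of_sum_eq_one {a : Fin m →₀ ℕ} (h : ∑ i, a i = 1) :
    ∃ i, a = Finsupp.single i 1 := by
  obtain ⟨i, hi⟩ : ∃ i, a i ≠ 0 := by
    by_contra hc; push_neg at hc
    simp [hc] at h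
  refine ⟨i, ?_⟩
  have hsplit : a i + ∑ k ∈ Finset.univ.erase i, a k = 1 := by
    rw [Finset.add_sum_erase _ _ (Finset.mem_univ i)]; exact h
  have hai : a i = 1 := by omega
  have hrest : ∑ k ∈ Finset.univ.erase i, a k = 0 := by omega
  ext k
  by_cases hk : k = i
  · subst hk; simp [hai, Finsupp.single_apply]
  · have : a k = 0 := by
      have := (Finset.sum_eq_zero_iff).mp hrest k (by simp [hk])
      exact this
    simp [this, Finsupp.single_apply, Ne.symm hk]


lemma not_le_of_mem_ker (he : Function.Injective e) (hl : ∀ i, ¬ (e i).IsDiag)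
    {a c u : Fin m →₀ ℕ} (h : monomial a (1 : K) - monomial c 1 ∈ toricIdeal K e)
    (hac : a ≠ c) (hau : a ≠ u) (hu2 : ∑ i, u i = 2) : ¬ a ≤ u := by
  intro hle
  have hle' : ∀ i, a i ≤ u i := Finsupp.le_def.mp hle
  have hsum : ∑ i, a i = ∑ i, c i := sum_eq_of_mem_ker e hl h
  have hsle : ∑ i, a i ≤ 2 := hu2 ▸ Finset.sum_le_sum fun i _ => hle' i
  have htri : ∑ i, a i = 0 ∨ ∑ i, a i = 1 ∨ ∑ i, a i = 2 := by omega
  rcases htri with hsa | hsa | hsa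
  · -- both zero
    have ha0 : a = 0 := by
      ext i; exact Finset.sum_eq_zero_iff.mp hsa i (Finset.mem_univ i)
    have hc0 : c = 0 := by
      ext i; exact Finset.sum_eq_zero_iff.mp (by omega) i (Finset.mem_univ i)
    exact hac (ha0.trans hc0.symm)
  · -- both singles, edges equal, contradiction with injectivity
    obtain ⟨i, hai⟩ := eq_single_of_sum_eq_one hsa
    obtain ⟨i', hci⟩ := eq_single_of_sum_eq_one (a := c) (by omega)
    have hsingle : ∀ (k : Fin m) (j : Fin n),
        ∑ i, (Finsupp.single k 1) i * incid e i j = incid e k j := by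
      intro k j
      rw [Finset.sum_eq_single k]
      · simp
      · intro b _ hb; simp [Finsupp.single_apply, Ne.symm hb]
      · intro hb; exact absurd (Finset.mem_univ k) hb
    have hee : e i = e i' := by
      apply Sym2.ext
      intro j
      have := ker_monomial_sub e h j
      rw [hai, hci, hsingle i j, hsingle i' j] at this
      unfold incid at this
      by_cases h1 : j ∈ e i <;> by_cases h2 : j ∈ e i' <;> simp_all
    exact hac (by rw [hai, hci, he hee])
  · -- a ≤ u with equal sums forces a = u
    have : ∀ i ∈ Finset.univ, a i = u i :=
      (Finset.sum_eq_sum_iff_of_le fun i _ => hle' i).mp (hsa.trans hu2.symm)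
    exact hau (Finsupp.ext fun i => this i (Finset.mem_univ i))

lemma indispensable_of_quadratic (he : Function.Injective e) (hl : ∀ i, ¬ (e i).IsDiag)
    {u v : Fin m →₀ ℕ} (huv : u ≠ v) (hu2 : ∑ i, u i = 2)
    (hmem : monomial u (1 : K) - monomial v 1 ∈ toricIdeal K e) :
    ∀ S : Set (MvPolynomial (Fin m) K),
      (∀ p ∈ S, ∃ a c : Fin m →₀ ℕ, p = monomial a 1 - monomial c 1) →
      Ideal.span S = toricIdeal K e →
      ∃ p ∈ S, ∃ w : Fin m →₀ ℕ,
        p = monomial u 1 - monomial w 1 ∨ p = monomial w 1 - monomial u 1 := by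
  intro S hSbin hSspan
  by_contra hno
  push_neg at hno
  have key : ∀ f ∈ Ideal.span S, ∀ g, coeff u (g * f) = 0 := by
    intro f hf
    refine Submodule.span_induction ?_ ?_ ?_ ?_ hf
    · intro p hp g
      obtain ⟨a, c, rfl⟩ := hSbin p hp
      have hpI : monomial a (1 : K) - monomial c 1 ∈ toricIdeal K e :=
        hSspan ▸ Ideal.subset_span hp
      by_cases hac : a = c
      · simp [hac]
      have hau : a ≠ u := by
        intro h; exact (hno _ hp c).1 (by rw [h])
      have hcu : c ≠ u := by
        intro h; exact (hno _ hp a).2 (by rw [h])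
      have hpI' : monomial c (1 : K) - monomial a 1 ∈ toricIdeal K e := by
        have := neg_mem hpI
        rwa [neg_sub] at this
      have hna : ¬ a ≤ u := not_le_of_mem_ker e he hl hpI hac hau hu2
      have hnc : ¬ c ≤ u := not_le_of_mem_ker e he hl hpI' (Ne.symm hac) hcu hu2
      rw [mul_sub, coeff_sub, coeff_mul_monomial', coeff_mul_monomial',
        if_neg hna, if_neg hnc, sub_zero]
    · intro g; simp
    · intro f1 f2 _ _ h1 h2 g
      rw [mul_add, coeff_add, h1 g, h2 g, add_zero]
    · intro r f _ hf g
      rw [smul_eq_mul, ← mul_assoc]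
      exact hf (g * r)
  have h1 := key _ (by rwa [hSspan]) 1
  rw [one_mul, coeff_sub, coeff_monomial, coeff_monomial, if_pos rfl,
    if_neg (Ne.symm huv), sub_zero] at h1
  exact one_ne_zero h1

end Aux

lemma X_mul_X_eq_monomial {K : Type*} [CommRing K] {σ : Type*} (i j : σ) :
    (X i : MvPolynomial σ K) * X j = monomial (Finsupp.single i 1 + Finsupp.single j 1) 1 := by
  rw [MvPolynomial.X, MvPolynomial.X, monomial_mul, one_mul]

/-- If `B 1, …, B s` are quadratic binomials generating the toric ideal
`I_G` of a finite connected simple graph `G`, then the set of (exponent vectors of)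
monomials appearing in the binomials `B t` is exactly the set of indispensable monomials
of `I_G`. -/
theorem monomials_of_quadratic_generators_eq_indispensable
    {K : Type*} [Field K] [IsAlgClosed K]
    {n m : ℕ} (e : Fin m → Sym2 (Fin n))
    (he : Function.Injective e) (hl : ∀ i, ¬ (e i).IsDiag)
    (hconn : (SimpleGraph.fromEdgeSet (Set.range e)).Connected)
    (s : ℕ) (B : Fin s → MvPolynomial (Fin m) K)
    (hBquad : ∀ t, ∃ i j k l : Fin m, B t = X i * X j - X k * X l)
    (hBspan : Ideal.span (Set.range B) = toricIdeal K e) :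
    {u : Fin m →₀ ℕ | ∃ t, u ∈ (B t).support} =
      {u : Fin m →₀ ℕ | IndispensableMonomial (toricIdeal K e) u} := by
  ext u
  simp only [Set.mem_setOf_eq]
  constructor
  · rintro ⟨t, hu⟩
    obtain ⟨i, j, k, l, hB⟩ := hBquad t
    set a := Finsupp.single i 1 + Finsupp.single j 1 with ha
    set c := Finsupp.single k 1 + Finsupp.single l 1 with hc
    have hBa : B t = monomial a 1 - monomial c 1 := by
      rw [hB, X_mul_X_eq_monomial, X_mul_X_eq_monomial]
    have hsa : ∑ p, a p = 2 := by
      simp [ha, Finsupp.add_apply, Finsupp.single_apply, Finset.sum_add_distrib]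
    have hsc : ∑ p, c p = 2 := by
      simp [hc, Finsupp.add_apply, Finsupp.single_apply, Finset.sum_add_distrib]
    have hac : a ≠ c := by
      intro hacc
      rw [hBa, hacc, sub_self] at hu
      simp at hu
    have hBtI : B t ∈ toricIdeal K e := hBspan ▸ Ideal.subset_span ⟨t, rfl⟩
    have hu' : u = a ∨ u = c := by
      by_contra hcon
      push_neg at hcon
      rw [hBa, mem_support_iff, coeff_sub, coeff_monomial, coeff_monomial,
        if_neg (fun h => hcon.1 h.symm), if_neg (fun h => hcon.2 h.symm), sub_zero] at hu
      exact hu rfl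
    intro S hSbin hSspan
    have hSbin' : ∀ p ∈ S, ∃ a c : Fin m →₀ ℕ, p = monomial a 1 - monomial c 1 := hSbin
    rcases hu' with rfl | rfl
    · exact indispensable_of_quadratic e he hl hac hsa (hBa ▸ hBtI) S hSbin' hSspan
    · refine indispensable_of_quadratic e he hl (Ne.symm hac) hsc ?_ S hSbin' hSspan
      have := neg_mem hBtI
      rwa [hBa, neg_sub] at this
  · intro hind
    have hbin0 : ∀ p ∈ Set.range B \ {0}, IsBinomial p := by
      rintro p ⟨⟨t, rfl⟩, -⟩
      obtain ⟨i, j, k, l, hB⟩ := hBquad t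
      exact ⟨_, _, by rw [hB, X_mul_X_eq_monomial, X_mul_X_eq_monomial]⟩
    have hspan0 : Ideal.span (Set.range B \ {0}) = toricIdeal K e := by
      rw [← hBspan]
      refine le_antisymm (Ideal.span_mono Set.diff_subset) ?_
      rw [Ideal.span_le]
      rintro p ⟨t, rfl⟩
      by_cases h : B t = 0
      · rw [h]; exact (Ideal.span _).zero_mem
      · exact Ideal.subset_span ⟨⟨t, rfl⟩, h⟩
    obtain ⟨p, hpS, v, hp⟩ := hind _ hbin0 hspan0
    obtain ⟨⟨t, rfl⟩, hne⟩ := hpS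
    simp only [Set.mem_singleton_iff] at hne
    refine ⟨t, ?_⟩
    have huv : u ≠ v := by
      rintro rfl
      rcases hp with h | h <;> exact hne (by rw [h, sub_self])
    rw [mem_support_iff]
    rcases hp with h | h <;>
      rw [h, coeff_sub, coeff_monomial, coeff_monomial] <;>
      simp [huv, Ne.symm huv]
end
end

section
/- Let K_{3,3} be the complete bipartite graph on vertices {v_1,...,v_6} with edges {v_i, v_j} for i ∈ {1,2,3}, j ∈ {4,5,6}. Then I_{K_{3,3}} equals the radical of the ideal generated by the seven polynomials x_{14}x_{26} − x_{16}x_{24} + x_{15}x_{36} − x_{16}x_{35}, x_{25}x_{36} − x_{26}x_{35} + x_{14}x_{25} − x_{15}x_{24}, x_{24}x_{36} − x_{26}x_{34}, x_{15}x_{26} − x_{16}x_{25}, x_{24}x_{35} − x_{25}x_{34}, x_{14}x_{36} − x_{16}x_{34}, x_{14}x_{35} − x_{15}x_{34}. In particular ara(I_{K_{3,3}}) ≤ 7. -/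
/-!
By the Nullstellensatz it suffices to show that the seven polynomials cut out exactly the
`3 × 3` matrices of rank at most one, i.e. the matrices `(t i * s j)`: a polynomial vanishes on
all of these iff it lies in the kernel of the toric map, the field being infinite.
The last five polynomials are `2 × 2` minors. Each of the first two is a sum `m + m'` of two
further minors with `m * m'` in the ideal of those five binomials, so at a common zero
`m ^ 2 = m * (m + m') - m * m' = 0`, and both `m` and `m'` vanish. This gives all nine minors.
-/

open MvPolynomial

noncomputable section

/-- The toric map of the complete bipartite graph `K_{3,3}`: the variable `x (i, j)`
(corresponding to the edge `{v_{i+1}, v_{j+4}}`) is sent to `t_{i+1} * t_{j+4}`, where the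
six vertices are modelled by `Fin 3 ⊕ Fin 3`. -/
def toricMapK33 (K : Type*) [CommRing K] :
    MvPolynomial (Fin 3 × Fin 3) K →ₐ[K] MvPolynomial (Fin 3 ⊕ Fin 3) K :=
  aeval fun p => X (Sum.inl p.1) * X (Sum.inr p.2)

/-- The toric ideal `I_{K_{3,3}}` of the complete bipartite graph `K_{3,3}`. -/
def toricIdealK33 (K : Type*) [CommRing K] : Ideal (MvPolynomial (Fin 3 × Fin 3) K) :=
  RingHom.ker (toricMapK33 K)

/-- The arithmetical rank of an ideal: the least `s` such that there are `s` elements of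
`I` generating `I` up to radical. -/
def ara {R : Type*} [CommRing R] (I : Ideal R) : ℕ :=
  sInf {s | ∃ F : Fin s → R, (∀ i, F i ∈ I) ∧ (Ideal.span (Set.range F)).radical = I}

def rankOneLocus (ι κ R : Type*) [Mul R] : Set (ι × κ → R) :=
  {x | ∃ (t : ι → R) (s : κ → R), ∀ p, x p = t p.1 * s p.2}

section Minors

variable {ι κ R : Type*}

def MinorsVanish [Mul R] (x : ι × κ → R) : Prop :=
  ∀ i j k l, x (i, j) * x (k, l) = x (i, l) * x (k, j)

theorem minorsVanish_of_lt [CommRing R] [LinearOrder ι] [LinearOrder κ] {x : ι × κ → R}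
    (h : ∀ i k, i < k → ∀ j l, j < l → x (i, j) * x (k, l) = x (i, l) * x (k, j)) :
    MinorsVanish x := by
  intro i j k l
  rcases lt_trichotomy i k with hik | rfl | hki <;> rcases lt_trichotomy j l with hjl | rfl | hlj
  all_goals first
    | rfl
    | ring
    | exact h _ _ ‹_› _ _ ‹_›
    | linear_combination h _ _ ‹_› _ _ ‹_›
    | linear_combination -h _ _ ‹_› _ _ ‹_›

theorem mem_rankOneLocus_iff [Field R] {x : ι × κ → R} :
    x ∈ rankOneLocus ι κ R ↔ MinorsVanish x := by
  constructor
  · rintro ⟨t, s, hx⟩ i j k l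
    simp only [hx]
    ring
  · intro h
    by_cases hx : ∀ p, x p = 0
    · exact ⟨0, 0, fun p => by simp [hx]⟩
    push Not at hx
    obtain ⟨⟨a, b⟩, hab⟩ := hx
    refine ⟨fun i => x (i, b), fun j => x (a, j) / x (a, b), fun ⟨i, j⟩ => ?_⟩
    field_simp
    linear_combination h i j a b

theorem eq_zero_of_add_eq_zero_of_mul_eq_zero [CommRing R] [IsReduced R] {a b : R}
    (hsum : a + b = 0) (hprod : a * b = 0) : a = 0 := by
  refine IsReduced.eq_zero a ⟨2, ?_⟩
  linear_combination a * hsum - hprod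

end Minors

def sevenGeneratorsK33 (K : Type*) [CommRing K] : Fin 7 → MvPolynomial (Fin 3 × Fin 3) K :=
  ![X (0, 0) * X (1, 2) - X (0, 2) * X (1, 0) + X (0, 1) * X (2, 2) - X (0, 2) * X (2, 1),
    X (1, 1) * X (2, 2) - X (1, 2) * X (2, 1) + X (0, 0) * X (1, 1) - X (0, 1) * X (1, 0),
    X (1, 0) * X (2, 2) - X (1, 2) * X (2, 0),
    X (0, 1) * X (1, 2) - X (0, 2) * X (1, 1),
    X (1, 0) * X (2, 1) - X (1, 1) * X (2, 0),
    X (0, 0) * X (2, 2) - X (0, 2) * X (2, 0),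
    X (0, 0) * X (2, 1) - X (0, 1) * X (2, 0)]

theorem range_sevenGeneratorsK33 (K : Type*) [CommRing K] :
    Set.range (sevenGeneratorsK33 K) = {
      X (0, 0) * X (1, 2) - X (0, 2) * X (1, 0) + X (0, 1) * X (2, 2) - X (0, 2) * X (2, 1),
      X (1, 1) * X (2, 2) - X (1, 2) * X (2, 1) + X (0, 0) * X (1, 1) - X (0, 1) * X (1, 0),
      X (1, 0) * X (2, 2) - X (1, 2) * X (2, 0),
      X (0, 1) * X (1, 2) - X (0, 2) * X (1, 1),
      X (1, 0) * X (2, 1) - X (1, 1) * X (2, 0),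
      X (0, 0) * X (2, 2) - X (0, 2) * X (2, 0),
      X (0, 0) * X (2, 1) - X (0, 1) * X (2, 0)} := by
  simp only [sevenGeneratorsK33, Matrix.range_cons, Matrix.range_empty, Set.union_empty,
    Set.singleton_union]

theorem fin3_lt_cases {i k : Fin 3} (h : i < k) :
    (i = 0 ∧ k = 1) ∨ (i = 0 ∧ k = 2) ∨ (i = 1 ∧ k = 2) := by
  revert i k; decide

theorem minorsVanish_iff_eval_sevenGeneratorsK33 {R : Type*} [CommRing R] [IsReduced R]
    (x : Fin 3 × Fin 3 → R) :
    MinorsVanish x ↔ ∀ i, eval x (sevenGeneratorsK33 R i) = 0 := by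
  constructor
  · intro h i
    fin_cases i <;> simp only [sevenGeneratorsK33, Fin.reduceFinMk, Fin.isValue, Matrix.cons_val,
      map_add, map_sub, map_mul, eval_X]
    · linear_combination h 0 0 1 2 + h 0 1 2 2
    · linear_combination h 1 1 2 2 + h 0 0 1 1
    · linear_combination h 1 0 2 2
    · linear_combination h 0 1 1 2
    · linear_combination h 1 0 2 1
    · linear_combination h 0 0 2 2
    · linear_combination h 0 0 2 1
  · intro h
    simp only [Fin.forall_fin_succ, sevenGeneratorsK33, Fin.isValue, Matrix.cons_val_zero,
      Matrix.cons_val_succ, map_add, map_sub, map_mul, eval_X, IsEmpty.forall_iff] at h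
    obtain ⟨h₁, h₂, h₃, h₄, h₅, h₆, h₇, -⟩ := h
    have hm₁ : x (0, 0) * x (1, 2) - x (0, 2) * x (1, 0) = 0 :=
      eq_zero_of_add_eq_zero_of_mul_eq_zero (b := x (0, 1) * x (2, 2) - x (0, 2) * x (2, 1))
        (by linear_combination h₁)
        (by linear_combination (-(x (0, 1) * x (0, 2))) * h₃
          + (x (0, 0) * x (2, 2) - 2 * x (0, 2) * x (2, 0)) * h₄ + x (0, 2) ^ 2 * h₅
          + x (0, 2) * x (1, 1) * h₆ - x (0, 2) * x (1, 2) * h₇)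
    have hm₂ : x (0, 1) * x (2, 2) - x (0, 2) * x (2, 1) = 0 := by linear_combination h₁ - hm₁
    have hm₃ : x (1, 1) * x (2, 2) - x (1, 2) * x (2, 1) = 0 :=
      eq_zero_of_add_eq_zero_of_mul_eq_zero (b := x (0, 0) * x (1, 1) - x (0, 1) * x (1, 0))
        (by linear_combination h₂)
        (by linear_combination (-(x (0, 1) * x (1, 1))) * h₃ - x (1, 1) * x (2, 0) * h₄
          + x (0, 1) * x (1, 2) * h₅ + x (1, 1) ^ 2 * h₆ - x (1, 1) * x (1, 2) * h₇)
    have hm₄ : x (0, 0) * x (1, 1) - x (0, 1) * x (1, 0) = 0 := by linear_combination h₂ - hm₃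
    refine minorsVanish_of_lt fun i k hik j l hjl => ?_
    rcases fin3_lt_cases hik with ⟨rfl, rfl⟩ | ⟨rfl, rfl⟩ | ⟨rfl, rfl⟩ <;>
      rcases fin3_lt_cases hjl with ⟨rfl, rfl⟩ | ⟨rfl, rfl⟩ | ⟨rfl, rfl⟩
    exacts [sub_eq_zero.mp hm₄, sub_eq_zero.mp hm₁, sub_eq_zero.mp h₄, sub_eq_zero.mp h₇,
      sub_eq_zero.mp h₆, sub_eq_zero.mp hm₂, sub_eq_zero.mp h₅, sub_eq_zero.mp h₃,
      sub_eq_zero.mp hm₃]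

theorem eval_toricMapK33 {K : Type*} [CommRing K] (v : Fin 3 ⊕ Fin 3 → K)
    (f : MvPolynomial (Fin 3 × Fin 3) K) :
    eval v (toricMapK33 K f) = eval (fun p => v (Sum.inl p.1) * v (Sum.inr p.2)) f := by
  change aeval v (aeval _ f) = aeval _ f
  rw [comp_aeval_apply]
  simp

theorem vanishingIdeal_rankOneLocus {K : Type*} [Field K] [Infinite K] :
    vanishingIdeal K (rankOneLocus (Fin 3) (Fin 3) K) = toricIdealK33 K := by
  ext f
  simp only [mem_vanishingIdeal_iff, aeval_eq_eval, toricIdealK33, RingHom.mem_ker]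
  constructor
  · intro hf
    refine MvPolynomial.funext fun v => ?_
    rw [map_zero, eval_toricMapK33]
    exact hf _ ⟨fun i => v (Sum.inl i), fun j => v (Sum.inr j), fun p => rfl⟩
  · rintro hf x ⟨t, s, hx⟩
    obtain rfl : x = fun p => Sum.elim t s (Sum.inl p.1) * Sum.elim t s (Sum.inr p.2) := funext hx
    rw [← eval_toricMapK33, hf, map_zero]

theorem zeroLocus_span_sevenGeneratorsK33 {K : Type*} [Field K] :
    zeroLocus K (Ideal.span (Set.range (sevenGeneratorsK33 K))) =
      rankOneLocus (Fin 3) (Fin 3) K := by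
  ext x
  simp [zeroLocus_span, mem_rankOneLocus_iff, minorsVanish_iff_eval_sevenGeneratorsK33]

/-- The toric ideal of `K_{3,3}` is the radical of an ideal generated by
seven explicit polynomials (writing `x (a, b)` for the variable `x_{(a+1)(b+4)}` attached
to the edge `{v_{a+1}, v_{b+4}}`); in particular `ara (I_{K_{3,3}}) ≤ 7`. -/
theorem toricIdealK33_eq_radical_of_seven {K : Type*} [Field K] [IsAlgClosed K] :
    (Ideal.span {
      X (0, 0) * X (1, 2) - X (0, 2) * X (1, 0) + X (0, 1) * X (2, 2) - X (0, 2) * X (2, 1),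
      X (1, 1) * X (2, 2) - X (1, 2) * X (2, 1) + X (0, 0) * X (1, 1) - X (0, 1) * X (1, 0),
      X (1, 0) * X (2, 2) - X (1, 2) * X (2, 0),
      X (0, 1) * X (1, 2) - X (0, 2) * X (1, 1),
      X (1, 0) * X (2, 1) - X (1, 1) * X (2, 0),
      X (0, 0) * X (2, 2) - X (0, 2) * X (2, 0),
      (X (0, 0) * X (2, 1) - X (0, 1) * X (2, 0) : MvPolynomial (Fin 3 × Fin 3) K)}).radical
      = toricIdealK33 K ∧
    ara (toricIdealK33 K) ≤ 7 := by
  have hrad : (Ideal.span (Set.range (sevenGeneratorsK33 K))).radical = toricIdealK33 K := by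
    rw [← vanishingIdeal_zeroLocus_eq_radical (K := K), zeroLocus_span_sevenGeneratorsK33,
      vanishingIdeal_rankOneLocus]
  refine ⟨range_sevenGeneratorsK33 K ▸ hrad,
    Nat.sInf_le ⟨sevenGeneratorsK33 K, fun i => ?_, hrad⟩⟩
  exact hrad ▸ Ideal.le_radical (Ideal.subset_span ⟨i, rfl⟩)
end
end
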